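/- arXiv:math/0410028 — 5 statements merged into one kernel-verified Lean document; each statement's English description precedes it below -/
import Mathlib

section
/- Let n ≥ 1, let w_1,...,w_n be elements of the free group F_s on s generators, and let τ be a permutation of {1,...,n}. For each cycle C = (a_1,...,a_p) of τ, let w_C be the concatenation w_{a_1}w_{a_2}···w_{a_p} ∈ F_s. Then for every N ≥ 1 and all permutations σ_1,...,σ_s of {1,...,N}, the number of functions J : {1,...,n} → {1,...,N} satisfying w_a(σ_1,...,σ_s)(J(τ(a))) = J(a) for all a ∈ {1,...,n} equals the product over cycles C of τ of the number of fixed points of the permutation w_C(σ_1,...,σ_s). -/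
open Equiv MeasureTheory ProbabilityTheory Filter

noncomputable section

/-- Number of fixed points of a permutation of `Fin N`. -/
def fixCount {N : ℕ} (σ : Equiv.Perm (Fin N)) : ℕ :=
  (Finset.univ.filter fun i => σ i = i).card

/-- The set of minimal representatives of the cycles (orbits) of a permutation,
fixed points counting as cycles of length 1. -/
def cycleReps {N : ℕ} (τ : Equiv.Perm (Fin N)) : Finset (Fin N) :=
  Finset.univ.filter fun a => ∀ k ∈ Finset.range N, a ≤ (τ ^ k) a

/-- The number of cycles of a permutation (fixed points included). -/
def cycleCount {N : ℕ} (τ : Equiv.Perm (Fin N)) : ℕ := (cycleReps τ).card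

/-- Substitution of the permutations `σ 1, ..., σ s` for the generators in a word
of the free group on `s` generators. -/
def wordPerm {s N : ℕ} (σ : Fin s → Equiv.Perm (Fin N)) (w : FreeGroup (Fin s)) :
    Equiv.Perm (Fin N) := FreeGroup.lift σ w

/-- For a cycle `C = (a, τ a, τ² a, ...)` of `τ` (with representative `a`), the
concatenated word `w_C = w_a · w_{τ a} · ... `. -/
def cycleWord {n s : ℕ} (τ : Equiv.Perm (Fin n)) (w : Fin n → FreeGroup (Fin s)) (a : Fin n) :
    FreeGroup (Fin s) :=
  ((List.range (Function.minimalPeriod τ a)).map fun i => w ((τ ^ i) a)).prod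

/-- The permutation matrix of `σ`: `(i,j)` entry is `1` iff `σ j = i`. -/
def permMat (N : ℕ) (σ : Equiv.Perm (Fin N)) : Matrix (Fin N) (Fin N) ℂ :=
  Matrix.of fun i j => if σ j = i then 1 else 0

/-- The permutation `γ_{m,n} = (1,...,m)(m+1,...,m+n)`. -/
def gammaMN (m n : ℕ) : Equiv.Perm (Fin (m + n)) :=
  (finSumFinEquiv.symm.trans ((Equiv.sumCongr (finRotate m) (finRotate n)).trans finSumFinEquiv))

instance measurableSpacePermFin {N : ℕ} : MeasurableSpace (Equiv.Perm (Fin N)) := ⊤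

namespace Stmt2Aux

variable {n : ℕ} (τ : Equiv.Perm (Fin n))

lemma pow_apply_eq_iterate (k : ℕ) (b : Fin n) : (τ ^ k) b = τ^[k] b := by
  rw [Equiv.Perm.iterate_eq_pow]

lemma isPer (b : Fin n) : Function.IsPeriodicPt τ (orderOf τ) b := by
  unfold Function.IsPeriodicPt Function.IsFixedPt
  rw [Equiv.Perm.iterate_eq_pow, pow_orderOf_eq_one]; rfl

lemma per_pos (b : Fin n) : 0 < Function.minimalPeriod τ b :=
  (isPer τ b).minimalPeriod_pos (orderOf_pos τ)

lemma pow_per (b : Fin n) : (τ ^ Function.minimalPeriod τ b) b = b := by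
  rw [pow_apply_eq_iterate]; exact Function.isPeriodicPt_minimalPeriod τ b

lemma pow_mul_per (k : ℕ) (b : Fin n) :
    (τ ^ (k * Function.minimalPeriod τ b)) b = b := by
  induction k with
  | zero => simp
  | succ k ih => rw [add_mul, one_mul, pow_add, Equiv.Perm.mul_apply, pow_per, ih]

lemma pow_mod_per (k : ℕ) (b : Fin n) :
    (τ ^ (k % Function.minimalPeriod τ b)) b = (τ ^ k) b := by
  rw [pow_apply_eq_iterate, pow_apply_eq_iterate]
  exact Function.iterate_mod_minimalPeriod_eq

lemma per_le (b : Fin n) : Function.minimalPeriod τ b ≤ n := by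
  classical
  have hinj : Set.InjOn (fun k => (τ ^ k) b)
      ((Finset.range (Function.minimalPeriod τ b)) : Set ℕ) := by
    intro i hi j hj hij
    simp only [Finset.coe_range, Set.mem_Iio] at hi hj
    have : τ^[i] b = τ^[j] b := by
      rw [← pow_apply_eq_iterate, ← pow_apply_eq_iterate]; exact hij
    exact (Function.iterate_eq_iterate_iff_of_lt_minimalPeriod hi hj).1 this
  calc Function.minimalPeriod τ b
      = ((Finset.range (Function.minimalPeriod τ b)).image fun k => (τ ^ k) b).card := by
        rw [Finset.card_image_of_injOn hinj, Finset.card_range]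
    _ ≤ (Finset.univ : Finset (Fin n)).card := Finset.card_le_card (Finset.subset_univ _)
    _ = n := by simp

def orbitF (b : Fin n) : Finset (Fin n) := (Finset.range n).image fun k => (τ ^ k) b

lemma mem_orbitF_iff {b c : Fin n} : c ∈ orbitF τ b ↔ ∃ k : ℕ, (τ ^ k) b = c := by
  constructor
  · rintro h
    obtain ⟨k, -, hk⟩ := Finset.mem_image.1 h
    exact ⟨k, hk⟩
  · rintro ⟨k, hk⟩
    refine Finset.mem_image.2 ⟨k % Function.minimalPeriod τ b, ?_, by rw [pow_mod_per]; exact hk⟩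
    exact Finset.mem_range.2 <| lt_of_lt_of_le (Nat.mod_lt _ (per_pos τ b)) (per_le τ b)

lemma self_mem_orbitF (b : Fin n) : b ∈ orbitF τ b :=
  (mem_orbitF_iff τ).2 ⟨0, by simp⟩

lemma orbitF_pow (k : ℕ) (b : Fin n) : orbitF τ ((τ ^ k) b) = orbitF τ b := by
  ext c
  rw [mem_orbitF_iff, mem_orbitF_iff]
  constructor
  · rintro ⟨m, hm⟩
    exact ⟨m + k, by rw [pow_add, Equiv.Perm.mul_apply]; exact hm⟩
  · rintro ⟨m, hm⟩
    refine ⟨m + k * Function.minimalPeriod τ b - k, ?_⟩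
    have hk : k ≤ k * Function.minimalPeriod τ b :=
      Nat.le_mul_of_pos_right k (per_pos τ b)
    rw [← Equiv.Perm.mul_apply, ← pow_add]
    have h1 : m + k * Function.minimalPeriod τ b - k + k = m + k * Function.minimalPeriod τ b := by
      omega
    rw [h1]
    have h2 : (τ ^ (k * Function.minimalPeriod τ b)) b = b := pow_mul_per τ k b
    rw [pow_add, Equiv.Perm.mul_apply, h2]; exact hm

def repF (b : Fin n) : Fin n := (orbitF τ b).min' ⟨b, self_mem_orbitF τ b⟩

lemma repF_le {b c : Fin n} (hc : c ∈ orbitF τ b) : repF τ b ≤ c := Finset.min'_le _ _ hc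

lemma repF_mem (b : Fin n) : repF τ b ∈ orbitF τ b := Finset.min'_mem _ _

lemma exists_pow_repF (b : Fin n) : ∃ j : ℕ, (τ ^ j) b = repF τ b :=
  (mem_orbitF_iff τ).1 (repF_mem τ b)

lemma orbitF_repF (b : Fin n) : orbitF τ (repF τ b) = orbitF τ b := by
  obtain ⟨j, hj⟩ := exists_pow_repF τ b
  rw [← hj, orbitF_pow]

lemma repF_pow (k : ℕ) (b : Fin n) : repF τ ((τ ^ k) b) = repF τ b := by
  unfold repF
  have := orbitF_pow τ k b
  congr 1

lemma repF_mem_cycleReps (b : Fin n) : repF τ b ∈ cycleReps τ := by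
  rw [cycleReps, Finset.mem_filter]
  refine ⟨Finset.mem_univ _, fun k _ => ?_⟩
  apply repF_le
  rw [← orbitF_repF τ b]
  exact (mem_orbitF_iff τ).2 ⟨k, rfl⟩

lemma repF_of_mem {a : Fin n} (ha : a ∈ cycleReps τ) : repF τ a = a := by
  refine le_antisymm (repF_le τ (self_mem_orbitF τ a)) ?_
  obtain ⟨j, hjn, hj⟩ := Finset.mem_image.1 (repF_mem τ a)
  rw [cycleReps, Finset.mem_filter] at ha
  rw [← hj]
  exact ha.2 j hjn

lemma exists_pow_of_repF (b : Fin n) : ∃ k : ℕ, (τ ^ k) (repF τ b) = b := by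
  have : b ∈ orbitF τ (repF τ b) := by rw [orbitF_repF]; exact self_mem_orbitF τ b
  exact (mem_orbitF_iff τ).1 this

def idxF (b : Fin n) : ℕ := Nat.find (exists_pow_of_repF τ b)

lemma idxF_spec (b : Fin n) : (τ ^ idxF τ b) (repF τ b) = b := Nat.find_spec (exists_pow_of_repF τ b)

lemma idxF_lt (b : Fin n) : idxF τ b < Function.minimalPeriod τ (repF τ b) := by
  have h1 : (τ ^ (idxF τ b % Function.minimalPeriod τ (repF τ b))) (repF τ b) = b := by
    rw [pow_mod_per]; exact idxF_spec τ b
  have h2 : idxF τ b ≤ idxF τ b % Function.minimalPeriod τ (repF τ b) :=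
    Nat.find_min' (exists_pow_of_repF τ b) h1
  exact lt_of_le_of_lt h2 (Nat.mod_lt _ (per_pos τ (repF τ b)))

lemma idxF_of_mem {a : Fin n} (ha : a ∈ cycleReps τ) : idxF τ a = 0 := by
  rw [idxF, Nat.find_eq_zero]
  rw [repF_of_mem τ ha]; simp

lemma pow_inj {a : Fin n} {i j : ℕ} (hi : i < Function.minimalPeriod τ a)
    (hj : j < Function.minimalPeriod τ a) (h : (τ ^ i) a = (τ ^ j) a) : i = j := by
  rw [pow_apply_eq_iterate, pow_apply_eq_iterate] at h
  exact (Function.iterate_eq_iterate_iff_of_lt_minimalPeriod hi hj).1 h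

variable {s N : ℕ} (w : Fin n → FreeGroup (Fin s)) (σ : Fin s → Equiv.Perm (Fin N))

def segWord (a : Fin n) (k : ℕ) : FreeGroup (Fin s) :=
  ((List.range (Function.minimalPeriod τ a - k)).map fun i => w ((τ ^ (k + i)) a)).prod

lemma segWord_zero (a : Fin n) : segWord τ w a 0 = cycleWord τ w a := by
  simp [segWord, cycleWord]

lemma wordPerm_mul (u v : FreeGroup (Fin s)) (x : Fin N) :
    wordPerm σ (u * v) x = wordPerm σ u (wordPerm σ v x) := by
  rw [wordPerm, wordPerm, wordPerm, map_mul, Equiv.Perm.mul_apply]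

/-- forward accumulation lemma -/
lemma J_prefix {J : Fin n → Fin N} (hJ : ∀ a, wordPerm σ (w a) (J (τ a)) = J a)
    (m : ℕ) (b : Fin n) :
    wordPerm σ (((List.range m).map fun i => w ((τ ^ i) b)).prod) (J ((τ ^ m) b)) = J b := by
  induction m with
  | zero => simp [wordPerm]
  | succ m ih =>
    rw [List.range_succ, List.map_append, List.prod_append, wordPerm_mul]
    have h1 : (τ ^ (m + 1)) b = τ ((τ ^ m) b) := by
      rw [pow_succ', Equiv.Perm.mul_apply]
    rw [h1]
    simp only [List.map_cons, List.map_nil, List.prod_cons, List.prod_nil, mul_one]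
    rw [hJ ((τ ^ m) b)]
    exact ih

/-- Fixed point: `J a` is fixed by the cycle word at `a`. -/
lemma J_fix {J : Fin n → Fin N} (hJ : ∀ a, wordPerm σ (w a) (J (τ a)) = J a) (a : Fin n) :
    wordPerm σ (cycleWord τ w a) (J a) = J a := by
  have := J_prefix τ w σ hJ (Function.minimalPeriod τ a) a
  rwa [pow_per, ← cycleWord] at this

/-- The value of a solution `J` at `b` is determined by its value at the representative. -/
lemma J_det {J : Fin n → Fin N} (hJ : ∀ a, wordPerm σ (w a) (J (τ a)) = J a) (b : Fin n) :
    J b = wordPerm σ (segWord τ w (repF τ b) (idxF τ b)) (J (repF τ b)) := by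
  set a := repF τ b with ha
  set k := idxF τ b with hk
  set p := Function.minimalPeriod τ a with hp
  have hkp : k ≤ p := le_of_lt (idxF_lt τ b)
  have hb : (τ ^ k) a = b := idxF_spec τ b
  have h1 : ((List.range (p - k)).map fun i => w ((τ ^ i) b)).prod = segWord τ w a k := by
    rw [segWord]
    congr 1
    apply List.map_congr_left
    intro i _
    congr 1
    rw [← hb, ← Equiv.Perm.mul_apply, ← pow_add, add_comm]
  have h2 : (τ ^ (p - k)) b = a := by
    rw [← hb, ← Equiv.Perm.mul_apply, ← pow_add, Nat.sub_add_cancel hkp, pow_per]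
  have := J_prefix τ w σ hJ (p - k) b
  rw [h1, h2] at this
  exact this.symm

/-- The inverse construction. -/
def Jof (x : ∀ _ : (cycleReps τ : Finset (Fin n)), Fin N) (b : Fin n) : Fin N :=
  wordPerm σ (segWord τ w (repF τ b) (idxF τ b)) (x ⟨repF τ b, repF_mem_cycleReps τ b⟩)

lemma Jof_rep (x : ∀ _ : (cycleReps τ : Finset (Fin n)), Fin N)
    (hx : ∀ a : {y // y ∈ cycleReps τ}, wordPerm σ (cycleWord τ w (a : Fin n)) (x a) = x a)
    (a : Fin n) (ha : a ∈ cycleReps τ) : Jof τ w σ x a = x ⟨a, ha⟩ := by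
  rw [Jof]
  have h1 : repF τ a = a := repF_of_mem τ ha
  have h2 : idxF τ a = 0 := idxF_of_mem τ ha
  rw [h2, segWord_zero]
  have := hx ⟨repF τ a, repF_mem_cycleReps τ a⟩
  simp only [h1] at this ⊢
  exact this

lemma Jof_sol (x : ∀ _ : (cycleReps τ : Finset (Fin n)), Fin N)
    (hx : ∀ a : {y // y ∈ cycleReps τ}, wordPerm σ (cycleWord τ w (a : Fin n)) (x a) = x a) (b : Fin n) :
    wordPerm σ (w b) (Jof τ w σ x (τ b)) = Jof τ w σ x b := by
  set a := repF τ b with ha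
  set k := idxF τ b with hk
  set p := Function.minimalPeriod τ a with hp
  have hkp : k < p := idxF_lt τ b
  have hb : (τ ^ k) a = b := idxF_spec τ b
  have htb : (τ ^ (k + 1)) a = τ b := by rw [pow_succ', Equiv.Perm.mul_apply, hb]
  have hrep : repF τ (τ b) = a := by
    rw [← htb, repF_pow]
    exact repF_of_mem τ (repF_mem_cycleReps τ b)
  by_cases hcase : k + 1 < p
  · -- idx (τ b) = k + 1
    have hidx : idxF τ (τ b) = k + 1 := by
      have hspec : (τ ^ idxF τ (τ b)) a = τ b := by
        have := idxF_spec τ (τ b); rwa [hrep] at this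
      have hlt : idxF τ (τ b) < p := by
        have := idxF_lt τ (τ b); rwa [hrep] at this
      exact pow_inj τ hlt hcase (hspec.trans htb.symm)
    have hsplit : segWord τ w a k = w b * segWord τ w a (k + 1) := by
      have hr : p - k = (p - (k + 1)) + 1 := by omega
      rw [segWord, segWord, hr, List.range_succ_eq_map, List.map_cons, List.prod_cons,
        List.map_map]
      congr 1
      · rw [add_zero, hb]
      · congr 1
        apply List.map_congr_left
        intro i _
        have hie : k + Nat.succ i = (k + 1) + i := by omega
        simp only [Function.comp_apply, hie]
    have hxeq : (⟨repF τ (τ b), repF_mem_cycleReps τ (τ b)⟩ : {y // y ∈ cycleReps τ})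
        = ⟨repF τ b, repF_mem_cycleReps τ b⟩ := Subtype.ext hrep
    have hJtb : Jof τ w σ x (τ b)
        = wordPerm σ (segWord τ w a (k + 1)) (x ⟨repF τ b, repF_mem_cycleReps τ b⟩) := by
      rw [Jof, hxeq, hrep, hidx]
    rw [hJtb, Jof, ← wordPerm_mul, ← hsplit]
  · -- k + 1 = p, τ b = a
    have hk1 : k + 1 = p := by omega
    have htba : τ b = a := by
      rw [← hb, ← Equiv.Perm.mul_apply, ← pow_succ', hk1, hp, pow_per]
    have hJtb : Jof τ w σ x (τ b) = x ⟨a, repF_mem_cycleReps τ b⟩ := by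
      rw [htba]
      exact Jof_rep τ w σ x hx a (ha ▸ repF_mem_cycleReps τ b)
    have hseg : segWord τ w a k = w b := by
      rw [segWord]
      have h1 : p - k = 1 := by omega
      rw [h1]
      simp [List.range_succ, hb]
    rw [hJtb, Jof, ← hseg]

end Stmt2Aux

open Stmt2Aux in
/-- Lemma 2.5: the number of functions `J : [n] → [N]` with
`w_a(σ)(J(τ a)) = J a` for all `a` equals the product over the cycles `C` of `τ`
of the number of fixed points of `w_C(σ)`. -/
theorem stmt2 {s n N : ℕ} (hn : 1 ≤ n) (hN : 1 ≤ N)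
    (w : Fin n → FreeGroup (Fin s)) (τ : Equiv.Perm (Fin n))
    (σ : Fin s → Equiv.Perm (Fin N)) :
    Nat.card {J : Fin n → Fin N // ∀ a, wordPerm σ (w a) (J (τ a)) = J a}
      = ∏ a ∈ cycleReps τ, fixCount (wordPerm σ (cycleWord τ w a)) := by
  classical
  have key : Nat.card {J : Fin n → Fin N // ∀ a, wordPerm σ (w a) (J (τ a)) = J a}
      = Nat.card (∀ a : (cycleReps τ : Finset (Fin n)),
          {y : Fin N // wordPerm σ (cycleWord τ w (a : Fin n)) y = y}) := by
    apply Nat.card_congr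
    refine
      { toFun := fun J a => ⟨J.1 (a : Fin n), J_fix τ w σ J.2 (a : Fin n)⟩
        invFun := fun x => ⟨Jof τ w σ (fun a => (x a).1), fun b =>
          Jof_sol τ w σ _ (fun a => (x a).2) b⟩
        left_inv := ?_
        right_inv := ?_ }
    · rintro ⟨J, hJ⟩
      apply Subtype.ext
      funext b
      exact (J_det τ w σ hJ b).symm
    · intro x
      funext a
      apply Subtype.ext
      exact Jof_rep τ w σ (fun a => (x a).1) (fun a => (x a).2) a.1 a.2
  rw [key, Nat.card_pi, ← Finset.prod_coe_sort (cycleReps τ)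
    (fun a => fixCount (wordPerm σ (cycleWord τ w a)))]
  apply Finset.prod_congr rfl
  intro a _
  rw [Nat.card_eq_fintype_card, fixCount, Fintype.card_subtype]
end
end

section
/- For every n ≥ 1 and every permutation τ of {1,...,n}, the number of cycles of τ plus the number of cycles of τ⁻¹γ_n is at most n + 1, where γ_n is the cycle (1,2,...,n). -/
open Equiv MeasureTheory ProbabilityTheory Filter

noncomputable section

namespace Stmt3Aux

open Finset Equiv Equiv.Perm

open scoped Classical

variable {n : ℕ}

/-- minimal representative of the class of `a` under relation `P`. -/
noncomputable def rp (P : Fin n → Fin n → Prop) (hP : Equivalence P) (a : Fin n) : Fin n :=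
  (Finset.univ.filter fun b => P a b).min' ⟨a, by simp [hP.refl a]⟩

lemma rp_mem {P : Fin n → Fin n → Prop} (hP : Equivalence P) (a : Fin n) : P a (rp P hP a) := by
  have h := Finset.min'_mem (Finset.univ.filter fun b => P a b) ⟨a, by simp [hP.refl a]⟩
  exact (Finset.mem_filter.1 h).2

lemma rp_le {P : Fin n → Fin n → Prop} (hP : Equivalence P) {a b : Fin n} (h : P a b) :
    rp P hP a ≤ b :=
  Finset.min'_le _ _ (by simpa using h)

lemma rp_eq_of_rel {P : Fin n → Fin n → Prop} (hP : Equivalence P) {a b : Fin n} (h : P a b) :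
    rp P hP a = rp P hP b := by
  have hs : (Finset.univ.filter fun c => P a c) = (Finset.univ.filter fun c => P b c) := by
    ext c
    simp only [Finset.mem_filter, Finset.mem_univ, true_and]
    exact ⟨fun hc => hP.trans (hP.symm h) hc, fun hc => hP.trans h hc⟩
  simp only [rp, hs]

lemma rp_rel_of_eq {P : Fin n → Fin n → Prop} (hP : Equivalence P) {a b : Fin n}
    (h : rp P hP a = rp P hP b) : P a b :=
  hP.trans (h ▸ rp_mem hP a) (hP.symm (rp_mem hP b))

lemma rp_idem {P : Fin n → Fin n → Prop} (hP : Equivalence P) (a : Fin n) :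
    rp P hP (rp P hP a) = rp P hP a :=
  (rp_eq_of_rel hP (rp_mem hP a)).symm

lemma rp_fix_of_mem_image {P : Fin n → Fin n → Prop} (hP : Equivalence P) {a : Fin n}
    (h : a ∈ Finset.image (rp P hP) Finset.univ) : rp P hP a = a := by
  obtain ⟨c, -, rfl⟩ := Finset.mem_image.1 h
  exact rp_idem hP c

/-- coarser relation has at most as many classes -/
lemma card_rp_le {P Q : Fin n → Fin n → Prop} (hP : Equivalence P) (hQ : Equivalence Q)
    (h : ∀ a b, P a b → Q a b) :
    (Finset.image (rp Q hQ) Finset.univ).card ≤ (Finset.image (rp P hP) Finset.univ).card := by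
  have key : ∀ a, rp Q hQ a = rp Q hQ (rp P hP a) := fun a =>
    rp_eq_of_rel hQ (h _ _ (rp_mem hP a))
  have himg : Finset.image (rp Q hQ) Finset.univ
      = Finset.image (rp Q hQ) (Finset.image (rp P hP) Finset.univ) := by
    rw [Finset.image_image]
    exact Finset.image_congr fun a _ => key a
  rw [himg]
  exact Finset.card_image_le

/-- the join of `P` with identifying `x ~ y`. -/
def jn (P : Fin n → Fin n → Prop) (x y a b : Fin n) : Prop :=
  P a b ∨ (P a x ∧ P b y) ∨ (P a y ∧ P b x)

lemma jn_equiv {P : Fin n → Fin n → Prop} (hP : Equivalence P) (x y : Fin n) :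
    Equivalence (jn P x y) := by
  constructor
  · exact fun a => Or.inl (hP.refl a)
  · rintro a b (h | ⟨h1, h2⟩ | ⟨h1, h2⟩)
    · exact Or.inl (hP.symm h)
    · exact Or.inr (Or.inr ⟨h2, h1⟩)
    · exact Or.inr (Or.inl ⟨h2, h1⟩)
  · rintro a b c (h | ⟨h1, h2⟩ | ⟨h1, h2⟩) (h' | ⟨h1', h2'⟩ | ⟨h1', h2'⟩)
    · exact Or.inl (hP.trans h h')
    · exact Or.inr (Or.inl ⟨hP.trans h h1', h2'⟩)
    · exact Or.inr (Or.inr ⟨hP.trans h h1', h2'⟩)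
    · exact Or.inr (Or.inl ⟨h1, hP.trans (hP.symm h') h2⟩)
    · exact Or.inl (hP.trans (hP.trans h1 (hP.trans (hP.symm h1') h2)) (hP.symm h2'))
    · exact Or.inl (hP.trans h1 (hP.symm h2'))
    · exact Or.inr (Or.inr ⟨h1, hP.trans (hP.symm h') h2⟩)
    · exact Or.inl (hP.trans h1 (hP.symm h2'))
    · exact Or.inl (hP.trans (hP.trans h1 (hP.trans (hP.symm h1') h2)) (hP.symm h2'))
/-- classes of the join with one pair: at most one more class than before. -/
lemma card_rp_le_jn {P : Fin n → Fin n → Prop} (hP : Equivalence P) (x y : Fin n)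
    (hQ : Equivalence (jn P x y)) :
    (Finset.image (rp P hP) Finset.univ).card ≤
      (Finset.image (rp (jn P x y) hQ) Finset.univ).card + 1 := by
  set S := Finset.image (rp P hP) Finset.univ with hS
  have hxS : rp P hP x ∈ S := Finset.mem_image_of_mem _ (Finset.mem_univ x)
  have hcard : S.card = (S.erase (rp P hP x)).card + 1 := by
    rw [Finset.card_erase_of_mem hxS]
    have : 0 < S.card := Finset.card_pos.2 ⟨_, hxS⟩
    omega
  rw [hcard]
  have hinj : Set.InjOn (rp (jn P x y) hQ) (S.erase (rp P hP x)) := by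
    intro a ha b hb hab
    have haS : a ∈ S := Finset.mem_of_mem_erase ha
    have hbS : b ∈ S := Finset.mem_of_mem_erase hb
    have hax : a ≠ rp P hP x := Finset.ne_of_mem_erase ha
    have hbx : b ≠ rp P hP x := Finset.ne_of_mem_erase hb
    have hfa : rp P hP a = a := rp_fix_of_mem_image hP haS
    have hfb : rp P hP b = b := rp_fix_of_mem_image hP hbS
    rcases rp_rel_of_eq hQ hab with h | ⟨h1, h2⟩ | ⟨h1, h2⟩
    · rw [← hfa, ← hfb]; exact rp_eq_of_rel hP h
    · exact absurd (hfa ▸ rp_eq_of_rel hP h1) hax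
    · exact absurd (hfb ▸ rp_eq_of_rel hP h2) hbx
  have hmaps : ∀ a ∈ S.erase (rp P hP x),
      rp (jn P x y) hQ a ∈ Finset.image (rp (jn P x y) hQ) Finset.univ :=
    fun a _ => Finset.mem_image_of_mem _ (Finset.mem_univ a)
  have := Finset.card_le_card_of_injOn _ hmaps hinj
  omega

lemma sc_equiv (σ : Perm (Fin n)) : Equivalence (SameCycle σ) :=
  ⟨fun a => SameCycle.refl σ a, fun h => h.symm, fun h1 h2 => h1.trans h2⟩

/-- every power can be replaced by a power with exponent < n. -/
lemma small_pow (σ : Perm (Fin n)) (a : Fin n) : ∀ j : ℕ, ∃ k < n, (σ ^ k) a = (σ ^ j) a := by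
  intro j
  induction j using Nat.strong_induction_on with
  | _ j IH =>
    by_cases hj : j < n
    · exact ⟨j, hj, rfl⟩
    · push_neg at hj
      have hn : 0 < n := a.pos
      obtain ⟨i, hi, i', hi', hne, heq⟩ :=
        Finset.exists_ne_map_eq_of_card_lt_of_maps_to (s := Finset.range (n + 1))
          (t := (Finset.univ : Finset (Fin n))) (by simp)
          (f := fun i => (σ ^ i) a) (fun i _ => Finset.mem_univ _)
      rw [Finset.mem_range] at hi hi'
      set u := min i i' with hu
      set v := max i i' with hv
      have hequv : (σ ^ v) a = (σ ^ u) a := by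
        rcases hne.lt_or_gt with h | h
        · rw [show u = i by omega, show v = i' by omega]
          exact heq.symm
        · rw [show u = i' by omega, show v = i by omega]
          exact heq
      have h1 : (σ ^ (j - v + u)) a = (σ ^ j) a := by
        have hstep : (σ ^ j) a = (σ ^ (j - v)) ((σ ^ v) a) := by
          rw [← Equiv.Perm.mul_apply, ← pow_add, Nat.sub_add_cancel (by omega)]
        rw [hstep, hequv, ← Equiv.Perm.mul_apply, ← pow_add]
      have h2 : j - v + u < j := by omega
      obtain ⟨k, hk, hk2⟩ := IH _ h2
      exact ⟨k, hk, hk2.trans h1⟩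

lemma sc_iff_small {σ : Perm (Fin n)} {a b : Fin n} :
    SameCycle σ a b ↔ ∃ k < n, (σ ^ k) a = b := by
  constructor
  · intro h
    obtain ⟨i, -, rfl⟩ := h.exists_pow_eq'
    exact small_pow σ a i
  · rintro ⟨k, -, rfl⟩
    exact ⟨(k : ℤ), by simp [zpow_natCast]⟩

lemma mem_cycleReps_iff {σ : Perm (Fin n)} {a : Fin n} :
    a ∈ cycleReps σ ↔ ∀ b, SameCycle σ a b → a ≤ b := by
  simp only [cycleReps, Finset.mem_filter, Finset.mem_univ, true_and, Finset.mem_range]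
  constructor
  · intro h b hb
    obtain ⟨k, hk, rfl⟩ := sc_iff_small.1 hb
    exact h k hk
  · intro h k hk
    exact h _ (sc_iff_small.2 ⟨k, hk, rfl⟩)

lemma cycleReps_eq (σ : Perm (Fin n)) :
    cycleReps σ = Finset.image (rp (SameCycle σ) (sc_equiv σ)) Finset.univ := by
  ext a
  rw [mem_cycleReps_iff]
  constructor
  · intro h
    refine Finset.mem_image.2 ⟨a, Finset.mem_univ a, ?_⟩
    exact le_antisymm (rp_le (sc_equiv σ) ((sc_equiv σ).refl a)) (h _ (rp_mem (sc_equiv σ) a))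
  · intro h b hb
    have hfix : rp (SameCycle σ) (sc_equiv σ) a = a := rp_fix_of_mem_image _ h
    calc a = rp (SameCycle σ) (sc_equiv σ) a := hfix.symm
    _ ≤ b := rp_le _ hb

lemma cycleCount_eq (σ : Perm (Fin n)) :
    cycleCount σ = (Finset.image (rp (SameCycle σ) (sc_equiv σ)) Finset.univ).card := by
  rw [cycleCount, cycleReps_eq]

/-- key: same cycle for `swap x y * σ` implies the join relation for `σ`. -/
lemma sc_swap_le_jn (σ : Perm (Fin n)) (x y : Fin n) {a b : Fin n}
    (h : SameCycle (swap x y * σ) a b) : jn (SameCycle σ) x y a b := by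
  have hstep : ∀ c : Fin n, jn (SameCycle σ) x y c ((swap x y * σ) c) := by
    intro c
    have hc : SameCycle σ c (σ c) := ⟨(1 : ℤ), by simp⟩
    simp only [Equiv.Perm.mul_apply]
    by_cases h1 : σ c = x
    · rw [h1, swap_apply_left]
      exact Or.inr (Or.inl ⟨h1 ▸ hc, (sc_equiv σ).refl y⟩)
    · by_cases h2 : σ c = y
      · rw [h2, swap_apply_right]
        exact Or.inr (Or.inr ⟨h2 ▸ hc, (sc_equiv σ).refl x⟩)
      · rw [swap_apply_of_ne_of_ne h1 h2]
        exact Or.inl hc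
  have hQ := jn_equiv (sc_equiv σ) x y
  obtain ⟨i, -, rfl⟩ := h.exists_pow_eq'
  clear h
  induction i with
  | zero => simpa using hQ.refl a
  | succ i IH =>
    have : ((swap x y * σ) ^ (i + 1)) a = (swap x y * σ) (((swap x y * σ) ^ i) a) := by
      rw [pow_succ', Equiv.Perm.mul_apply]
    rw [this]
    exact hQ.trans IH (hstep _)

/-- left multiplication by a swap decreases the cycle count by at most 1. -/
lemma count_le_swap_mul_add_one (σ : Perm (Fin n)) (x y : Fin n) :
    cycleCount σ ≤ cycleCount (swap x y * σ) + 1 := by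
  have hQ := jn_equiv (sc_equiv σ) x y
  have h1 := card_rp_le_jn (sc_equiv σ) x y hQ
  have h2 := card_rp_le (P := SameCycle (swap x y * σ)) (Q := jn (SameCycle σ) x y)
    (sc_equiv _) hQ (fun a b => sc_swap_le_jn σ x y)
  rw [cycleCount_eq σ, cycleCount_eq (swap x y * σ)]
  omega

/-- and increases it by at most 1. -/
lemma swap_mul_count_le_add_one (σ : Perm (Fin n)) (x y : Fin n) :
    cycleCount (swap x y * σ) ≤ cycleCount σ + 1 := by
  have := count_le_swap_mul_add_one (swap x y * σ) x y
  rwa [← mul_assoc, swap_mul_self, one_mul] at this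

lemma count_mul_swap_le_add_one (σ : Perm (Fin n)) (x y : Fin n) :
    cycleCount (σ * swap x y) ≤ cycleCount σ + 1 := by
  rw [mul_swap_eq_swap_mul]
  exact swap_mul_count_le_add_one σ (σ x) (σ y)

/-- splitting: if `σ x ≠ x`, then `swap x (σ x) * σ` has strictly more cycles. -/
lemma split_count (σ : Perm (Fin n)) {x : Fin n} (hx : σ x ≠ x) :
    cycleCount σ + 1 ≤ cycleCount (swap x (σ x) * σ) := by
  set σ' := swap x (σ x) * σ with hσ'
  have hs := sc_equiv σ
  have hs' := sc_equiv σ'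
  have hxsx : SameCycle σ x (σ x) := ⟨(1 : ℤ), by simp⟩
  -- s' ≤ s
  have hle : ∀ a b, SameCycle σ' a b → SameCycle σ a b := by
    intro a b h
    rcases sc_swap_le_jn σ x (σ x) h with h | ⟨h1, h2⟩ | ⟨h1, h2⟩
    · exact h
    · exact hs.trans (hs.trans h1 hxsx) (hs.symm h2)
    · exact hs.trans (hs.trans h1 (hs.symm hxsx)) (hs.symm h2)
  -- x is a fixed point of σ'
  have hfix : σ' x = x := by
    simp only [hσ', Equiv.Perm.mul_apply, swap_apply_right]
  -- x not same σ'-cycle as σ x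
  have hnot : ¬ SameCycle σ' x (σ x) := by
    intro h
    obtain ⟨i, -, hi⟩ := h.exists_pow_eq'
    rw [Equiv.Perm.pow_apply_eq_self_of_apply_eq_self hfix] at hi
    exact hx hi.symm
  set p := rp (SameCycle σ) hs with hp
  set p' := rp (SameCycle σ') hs' with hp'
  have hkey : ∀ a, p a = p (p' a) := fun a =>
    rp_eq_of_rel hs (hle _ _ (rp_mem hs' a))
  have himg : Finset.image p Finset.univ = Finset.image p (Finset.image p' Finset.univ) := by
    rw [Finset.image_image]
    exact Finset.image_congr fun a _ => hkey a
  have hne : p' (σ x) ≠ p' x := fun h => hnot ((rp_rel_of_eq hs' h).symm)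
  have hmem : p' (σ x) ∈ (Finset.image p' Finset.univ).erase (p' x) :=
    Finset.mem_erase.2 ⟨hne, Finset.mem_image_of_mem _ (Finset.mem_univ _)⟩
  have hsub : Finset.image p (Finset.image p' Finset.univ) ⊆
      Finset.image p ((Finset.image p' Finset.univ).erase (p' x)) := by
    intro b hb
    obtain ⟨c, hc, rfl⟩ := Finset.mem_image.1 hb
    by_cases hcx : c = p' x
    · refine Finset.mem_image.2 ⟨p' (σ x), hmem, ?_⟩
      rw [hcx, ← hkey x, ← hkey (σ x)]
      exact (rp_eq_of_rel hs hxsx).symm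
    · exact Finset.mem_image.2 ⟨c, Finset.mem_erase.2 ⟨hcx, hc⟩, rfl⟩
  have hxmem : p' x ∈ Finset.image p' Finset.univ :=
    Finset.mem_image_of_mem _ (Finset.mem_univ _)
  have h1 : cycleCount σ ≤ ((Finset.image p' Finset.univ).erase (p' x)).card := by
    rw [cycleCount_eq σ, ← hp, himg]
    exact le_trans (Finset.card_le_card hsub) Finset.card_image_le
  have h2 : ((Finset.image p' Finset.univ).erase (p' x)).card
      = (Finset.image p' Finset.univ).card - 1 := Finset.card_erase_of_mem hxmem
  have h3 : 0 < (Finset.image p' Finset.univ).card := Finset.card_pos.2 ⟨_, hxmem⟩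
  rw [cycleCount_eq σ', ← hp']
  omega

lemma count_one : cycleCount (1 : Perm (Fin n)) = n := by
  have : cycleReps (1 : Perm (Fin n)) = Finset.univ := by
    ext a
    simp [cycleReps]
  rw [cycleCount, this, Finset.card_univ, Fintype.card_fin]

lemma count_le (σ : Perm (Fin n)) : cycleCount σ ≤ n := by
  have := Finset.card_le_univ (cycleReps σ)
  simpa [cycleCount, Fintype.card_fin] using this

/-- decomposition into transpositions of the right length. -/
lemma decomp : ∀ m (σ : Perm (Fin n)), n - cycleCount σ ≤ m →
    ∃ L : List (Perm (Fin n)), (∀ t ∈ L, ∃ x y, t = swap x y) ∧ L.prod * σ = 1 ∧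
      L.length + cycleCount σ ≤ n := by
  intro m
  induction m with
  | zero =>
    intro σ hm
    by_cases hσ : ∀ x, σ x = x
    · have h1 : σ = 1 := Equiv.ext fun x => hσ x
      subst h1
      exact ⟨[], by simp, by simp, by simp [count_one]⟩
    · push_neg at hσ
      obtain ⟨x, hx⟩ := hσ
      have := split_count σ hx
      have := count_le (swap x (σ x) * σ)
      omega
  | succ m IH =>
    intro σ hm
    by_cases hσ : ∀ x, σ x = x
    · have h1 : σ = 1 := Equiv.ext fun x => hσ x
      subst h1
      exact ⟨[], by simp, by simp, by simp [count_one]⟩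
    · push_neg at hσ
      obtain ⟨x, hx⟩ := hσ
      have hsplit := split_count σ hx
      have hle' := count_le (swap x (σ x) * σ)
      obtain ⟨L, hL1, hL2, hL3⟩ := IH (swap x (σ x) * σ) (by omega)
      refine ⟨L ++ [swap x (σ x)], ?_, ?_, ?_⟩
      · intro t ht
        rcases List.mem_append.1 ht with h | h
        · exact hL1 t h
        · simp only [List.mem_singleton] at h
          exact ⟨x, σ x, h⟩
      · rw [List.prod_append, List.prod_singleton, mul_assoc]
        exact hL2
      · simp only [List.length_append, List.length_singleton]
        omega

lemma count_mul_list (L : List (Perm (Fin n))) (hL : ∀ t ∈ L, ∃ x y, t = swap x y) :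
    ∀ ρ : Perm (Fin n), cycleCount (ρ * L.prod) ≤ cycleCount ρ + L.length := by
  induction L with
  | nil => intro ρ; simp
  | cons t L' IH =>
    intro ρ
    obtain ⟨x, y, rfl⟩ := hL t (List.mem_cons_self)
    have h1 : ρ * (swap x y :: L').prod = (ρ * swap x y) * L'.prod := by
      rw [List.prod_cons, mul_assoc]
    rw [h1]
    have h2 := IH (fun t ht => hL t (List.mem_cons_of_mem _ ht)) (ρ * swap x y)
    have h3 := count_mul_swap_le_add_one ρ x y
    simp only [List.length_cons]
    omega

lemma count_finRotate (hn : 1 ≤ n) : cycleCount (finRotate n) ≤ 1 := by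
  rcases eq_or_lt_of_le hn with h | h
  · have hsing : Subsingleton (Fin n) := by rw [← h]; infer_instance
    have : cycleReps (finRotate n) ⊆ {⟨0, by omega⟩} := by
      intro a _
      simp [Subsingleton.elim a ⟨0, by omega⟩]
    exact le_trans (Finset.card_le_card this) (by simp)
  · have h2 : 2 ≤ n := h
    have hsupp := support_finRotate_of_le h2
    set z : Fin n := ⟨0, by omega⟩ with hz
    have hsub : cycleReps (finRotate n) ⊆ {z} := by
      intro a ha
      have hrel : SameCycle (finRotate n) a z := by
        refine (isCycle_finRotate_of_le h2).sameCycle ?_ ?_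
        · have : a ∈ Equiv.Perm.support (finRotate n) := hsupp ▸ Finset.mem_univ a
          exact Equiv.Perm.mem_support.1 this
        · have : z ∈ Equiv.Perm.support (finRotate n) := hsupp ▸ Finset.mem_univ _
          exact Equiv.Perm.mem_support.1 this
      have hle := mem_cycleReps_iff.1 ha z hrel
      have hzle : z ≤ a := by
        simp only [Fin.le_def, hz]
        omega
      simp only [Finset.mem_singleton]
      exact le_antisymm hle hzle
    exact le_trans (Finset.card_le_card hsub) (by simp)

end Stmt3Aux

/-- For every permutation `τ` of `{1,...,n}`, `#(τ) + #(τ⁻¹γₙ) ≤ n + 1`. -/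
theorem stmt3 {n : ℕ} (hn : 1 ≤ n) (τ : Equiv.Perm (Fin n)) :
    cycleCount τ + cycleCount (τ⁻¹ * finRotate n) ≤ n + 1 := by
  classical
  set σ := τ⁻¹ * finRotate n with hσ
  obtain ⟨L, hL1, hL2, hL3⟩ := Stmt3Aux.decomp n σ (Nat.sub_le _ _)
  have hprod : L.prod = σ⁻¹ := eq_inv_of_mul_eq_one_left hL2
  have hτ : τ = finRotate n * L.prod := by
    rw [hprod, hσ, mul_inv_rev, inv_inv, ← mul_assoc, mul_inv_cancel, one_mul]
  have h1 : cycleCount τ ≤ cycleCount (finRotate n) + L.length := by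
    rw [hτ]
    exact Stmt3Aux.count_mul_list L hL1 (finRotate n)
  have h2 := Stmt3Aux.count_finRotate (n := n) hn
  omega
end
end

section
/- Let n be even and let τ ∈ S_n be a non-crossing pairing. Then the Kreweras complement K(τ) := τ⁻¹γ_n is parity preserving: for every a ∈ {1,...,n}, a and K(τ)(a) have the same parity. -/
open Equiv MeasureTheory ProbabilityTheory Filter

noncomputable section

open Finset

section OrbitMachinery
variable {N : ℕ}

def orb (σ : Perm (Fin N)) (a : Fin N) : Finset (Fin N) :=
  (Finset.range N).image fun k => (σ ^ k) a

lemma exists_period (σ : Perm (Fin N)) (a : Fin N) :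
    ∃ p, 0 < p ∧ p ≤ N ∧ (σ ^ p) a = a := by
  have hN : 0 < N := a.pos
  have h : ∃ i ∈ Finset.range (N+1), ∃ j ∈ Finset.range (N+1), i ≠ j ∧ (σ ^ i) a = (σ ^ j) a := by
    have := Finset.exists_ne_map_eq_of_card_lt_of_maps_to
      (s := Finset.range (N+1)) (t := (Finset.univ : Finset (Fin N)))
      (by simp [hN]) (fun i _ => Finset.mem_univ ((σ ^ i) a))
    obtain ⟨i, hi, j, hj, hij, he⟩ := this
    exact ⟨i, hi, j, hj, hij, he⟩
  obtain ⟨i, hi, j, hj, hij, he⟩ := h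
  simp only [Finset.mem_range] at hi hj
  rcases Nat.lt_or_ge i j with hlt | hge
  · refine ⟨j - i, by omega, by omega, ?_⟩
    have : (σ ^ i) ((σ ^ (j - i)) a) = (σ ^ i) a := by
      rw [← Equiv.Perm.mul_apply, ← pow_add]
      rw [show i + (j - i) = j by omega]
      exact he.symm
    exact (σ ^ i).injective this
  · have hlt : j < i := by omega
    refine ⟨i - j, by omega, by omega, ?_⟩
    have : (σ ^ j) ((σ ^ (i - j)) a) = (σ ^ j) a := by
      rw [← Equiv.Perm.mul_apply, ← pow_add]
      rw [show j + (i - j) = i by omega]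
      exact he
    exact (σ ^ j).injective this

lemma pow_mul_period {σ : Perm (Fin N)} {a : Fin N} {p : ℕ} (hp : (σ ^ p) a = a) (t : ℕ) :
    (σ ^ (p * t)) a = a := by
  induction t with
  | zero => simp
  | succ t ih =>
      have : p * (t+1) = p * t + p := by ring
      rw [this, pow_add, Equiv.Perm.mul_apply, hp, ih]

lemma pow_mod_period {σ : Perm (Fin N)} {a : Fin N} {p : ℕ} (hp : (σ ^ p) a = a) (k : ℕ) :
    (σ ^ k) a = (σ ^ (k % p)) a := by
  conv_lhs => rw [show k = k % p + p * (k / p) from (Nat.mod_add_div k p).symm]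
  rw [pow_add, Equiv.Perm.mul_apply, pow_mul_period hp]

lemma mem_orb_iff {σ : Perm (Fin N)} {a b : Fin N} :
    b ∈ orb σ a ↔ ∃ k : ℕ, (σ ^ k) a = b := by
  constructor
  · rintro h
    simp only [orb, Finset.mem_image, Finset.mem_range] at h
    obtain ⟨k, _, hk⟩ := h
    exact ⟨k, hk⟩
  · rintro ⟨k, hk⟩
    obtain ⟨p, hp0, hpN, hp⟩ := exists_period σ a
    simp only [orb, Finset.mem_image, Finset.mem_range]
    exact ⟨k % p, lt_of_lt_of_le (Nat.mod_lt _ hp0) hpN, by rw [← pow_mod_period hp k]; exact hk⟩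

lemma mem_orb_self {σ : Perm (Fin N)} (a : Fin N) : a ∈ orb σ a :=
  mem_orb_iff.2 ⟨0, rfl⟩

lemma orb_nonempty {σ : Perm (Fin N)} (a : Fin N) : (orb σ a).Nonempty :=
  ⟨a, mem_orb_self a⟩

lemma exists_pow_inv {σ : Perm (Fin N)} {a b : Fin N} {k : ℕ} (hk : (σ ^ k) a = b) :
    ∃ k' : ℕ, (σ ^ k') b = a := by
  obtain ⟨p, hp0, hpN, hp⟩ := exists_period σ a
  refine ⟨p - k % p, ?_⟩
  have hb : b = (σ ^ (k % p)) a := by rw [← pow_mod_period hp k, hk]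
  rw [hb, ← Equiv.Perm.mul_apply, ← pow_add]
  rw [show p - k % p + k % p = p from by have := Nat.mod_lt k hp0; omega]
  exact hp

lemma orb_eq_of_mem {σ : Perm (Fin N)} {a b : Fin N} (h : b ∈ orb σ a) :
    orb σ b = orb σ a := by
  obtain ⟨k, hk⟩ := mem_orb_iff.1 h
  obtain ⟨k', hk'⟩ := exists_pow_inv hk
  ext z
  simp only [mem_orb_iff]
  constructor
  · rintro ⟨j, hj⟩
    exact ⟨j + k, by rw [pow_add, Equiv.Perm.mul_apply, hk, hj]⟩
  · rintro ⟨j, hj⟩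
    exact ⟨j + k', by rw [pow_add, Equiv.Perm.mul_apply, hk', hj]⟩

def orbSet (σ : Perm (Fin N)) : Finset (Finset (Fin N)) :=
  Finset.univ.image (orb σ)

lemma mem_cycleReps_iff {σ : Perm (Fin N)} {a : Fin N} :
    a ∈ cycleReps σ ↔ ∀ k : ℕ, a ≤ (σ ^ k) a := by
  simp only [cycleReps, Finset.mem_filter, Finset.mem_univ, true_and]
  constructor
  · intro h k
    obtain ⟨p, hp0, hpN, hp⟩ := exists_period σ a
    rw [pow_mod_period hp k]
    exact h _ (Finset.mem_range.2 (lt_of_lt_of_le (Nat.mod_lt _ hp0) hpN))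
  · intro h k _
    exact h k

lemma cycleCount_eq_card_orbSet (σ : Perm (Fin N)) :
    cycleCount σ = (orbSet σ).card := by
  unfold cycleCount
  refine Finset.card_bij (fun a _ => orb σ a) ?_ ?_ ?_
  · intro a _
    exact Finset.mem_image.2 ⟨a, Finset.mem_univ a, rfl⟩
  · intro a ha b hb hab
    have hab' : orb σ a = orb σ b := hab
    have hba : b ∈ orb σ a := hab' ▸ mem_orb_self b
    obtain ⟨k, hk⟩ := mem_orb_iff.1 hba
    have hab2 : a ∈ orb σ b := hab' ▸ mem_orb_self a
    obtain ⟨k', hk'⟩ := mem_orb_iff.1 hab2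
    exact le_antisymm (hk ▸ (mem_cycleReps_iff.1 ha) k) (hk' ▸ (mem_cycleReps_iff.1 hb) k')
  · intro O hO
    obtain ⟨x, _, rfl⟩ := Finset.mem_image.1 hO
    refine ⟨(orb σ x).min' (orb_nonempty x), ?_, ?_⟩
    · have hmem : (orb σ x).min' (orb_nonempty x) ∈ orb σ x := Finset.min'_mem _ _
      rw [mem_cycleReps_iff]
      intro k
      have h1 := orb_eq_of_mem hmem
      have h2 : (σ ^ k) ((orb σ x).min' (orb_nonempty x)) ∈ orb σ ((orb σ x).min' (orb_nonempty x)) :=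
        mem_orb_iff.2 ⟨k, rfl⟩
      rw [h1] at h2
      exact Finset.min'_le _ _ h2
    · exact orb_eq_of_mem (Finset.min'_mem _ _)

lemma orbSet_disjoint {σ : Perm (Fin N)} {O₁ O₂ : Finset (Fin N)}
    (h1 : O₁ ∈ orbSet σ) (h2 : O₂ ∈ orbSet σ) (hne : O₁ ≠ O₂) : Disjoint O₁ O₂ := by
  obtain ⟨x, _, rfl⟩ := Finset.mem_image.1 h1
  obtain ⟨y, _, rfl⟩ := Finset.mem_image.1 h2
  rw [Finset.disjoint_left]
  intro z hz1 hz2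
  exact hne ((orb_eq_of_mem hz1).symm.trans (orb_eq_of_mem hz2))

lemma sum_orbSet_card (σ : Perm (Fin N)) :
    ∑ O ∈ orbSet σ, O.card = N := by
  have hcov : Finset.univ = (orbSet σ).biUnion id := by
    ext x
    simp only [Finset.mem_univ, Finset.mem_biUnion, id, true_iff]
    exact ⟨orb σ x, Finset.mem_image.2 ⟨x, Finset.mem_univ x, rfl⟩, mem_orb_self x⟩
  have := Finset.card_biUnion (s := orbSet σ) (t := id)
    (fun O h1 P h2 hne => orbSet_disjoint h1 h2 hne)
  simp only [id] at this
  rw [← this, ← hcov, Finset.card_univ, Fintype.card_fin]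

end OrbitMachinery

section Involution
variable {N : ℕ}

lemma invol_inv_eq {τ : Perm (Fin N)} (hpair : ∀ a, τ (τ a) = a) : τ⁻¹ = τ :=
  Equiv.ext fun a => by conv_lhs => rw [← hpair a, ← Equiv.Perm.mul_apply, inv_mul_cancel, Equiv.Perm.one_apply]

lemma invol_pow {τ : Perm (Fin N)} (hpair : ∀ a, τ (τ a) = a) (k : ℕ) (a : Fin N) :
    (τ ^ k) a = if Even k then a else τ a := by
  induction k with
  | zero => simp
  | succ k ih =>
      rw [pow_succ', Equiv.Perm.mul_apply, ih]
      by_cases h : Even k <;> simp [h, Nat.even_add_one, hpair a]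

lemma orb_invol {τ : Perm (Fin N)} (hpair : ∀ a, τ (τ a) = a) (a : Fin N) :
    orb τ a = {a, τ a} := by
  ext z
  simp only [mem_orb_iff, Finset.mem_insert, Finset.mem_singleton]
  constructor
  · rintro ⟨k, rfl⟩
    rw [invol_pow hpair]
    split <;> simp
  · rintro (rfl | rfl)
    · exact ⟨0, rfl⟩
    · exact ⟨1, by simp⟩

lemma two_mul_cycleCount {τ : Perm (Fin N)} (hfix : ∀ a, τ a ≠ a)
    (hpair : ∀ a, τ (τ a) = a) : 2 * cycleCount τ = N := by
  have hcard : ∀ O ∈ orbSet τ, O.card = 2 := by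
    intro O hO
    obtain ⟨x, _, rfl⟩ := Finset.mem_image.1 hO
    rw [orb_invol hpair]
    rw [Finset.card_insert_of_notMem (by simp [Ne.symm (hfix x)]), Finset.card_singleton]
  have := sum_orbSet_card τ
  rw [Finset.sum_congr rfl hcard, Finset.sum_const, smul_eq_mul] at this
  rw [cycleCount_eq_card_orbSet]
  omega

lemma card_singleton_orbs_ge (σ : Perm (Fin N)) :
    2 * (orbSet σ).card ≤ N + ((orbSet σ).filter (fun O => O.card = 1)).card := by
  have h1 : ∀ O ∈ orbSet σ, 2 ≤ O.card + (if O.card = 1 then 1 else 0) := by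
    intro O hO
    obtain ⟨x, _, rfl⟩ := Finset.mem_image.1 hO
    have : 1 ≤ (orb σ x).card := Finset.card_pos.2 (orb_nonempty x)
    split <;> omega
  calc 2 * (orbSet σ).card = ∑ _O ∈ orbSet σ, 2 := by
        rw [Finset.sum_const, smul_eq_mul, Nat.mul_comm]
    _ ≤ ∑ O ∈ orbSet σ, (O.card + (if O.card = 1 then 1 else 0)) :=
        Finset.sum_le_sum h1
    _ = N + ((orbSet σ).filter (fun O => O.card = 1)).card := by
        rw [Finset.sum_add_distrib, sum_orbSet_card]
        congr 1
        rw [Finset.sum_ite, Finset.sum_const, Finset.sum_const]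
        simp

lemma exists_two_fixed {σ : Perm (Fin N)}
    (h : 2 ≤ ((orbSet σ).filter (fun O => O.card = 1)).card) :
    ∃ x y : Fin N, σ x = x ∧ σ y = y ∧ x ≠ y := by
  obtain ⟨O₁, hO₁, O₂, hO₂, hne⟩ := Finset.one_lt_card.1 h
  simp only [Finset.mem_filter] at hO₁ hO₂
  obtain ⟨x, hx⟩ := Finset.card_eq_one.1 hO₁.2
  obtain ⟨y, hy⟩ := Finset.card_eq_one.1 hO₂.2
  have hfix : ∀ O ∈ orbSet σ, ∀ z, O = {z} → σ z = z := by
    intro O hO z hz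
    obtain ⟨w, _, rfl⟩ := Finset.mem_image.1 hO
    have hzw : z ∈ orb σ w := hz ▸ Finset.mem_singleton_self z
    have : orb σ z = {z} := by rw [orb_eq_of_mem hzw, hz]
    have hσz : σ z ∈ orb σ z := mem_orb_iff.2 ⟨1, by simp⟩
    rw [this, Finset.mem_singleton] at hσz
    exact hσz
  refine ⟨x, y, hfix _ hO₁.1 _ hx, hfix _ hO₂.1 _ hy, ?_⟩
  rintro rfl
  exact hne (hx ▸ hy ▸ rfl)
end Involution

section Excision
variable {N : ℕ}

lemma orb_closed {σ : Perm (Fin N)} {x z : Fin N} (h : z ∈ orb σ x) : σ z ∈ orb σ x := by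
  obtain ⟨k, rfl⟩ := mem_orb_iff.1 h
  exact mem_orb_iff.2 ⟨k + 1, by rw [pow_succ', Equiv.Perm.mul_apply]⟩

lemma orb_fixed {σ : Perm (Fin N)} {a : Fin N} (h : σ a = a) : orb σ a = {a} := by
  ext z
  simp only [mem_orb_iff, Finset.mem_singleton]
  constructor
  · rintro ⟨k, rfl⟩
    induction k with
    | zero => rfl
    | succ k ih => rw [pow_succ', Equiv.Perm.mul_apply, ih, h]
  · rintro rfl; exact ⟨0, rfl⟩

lemma excise_fixed {σ : Perm (Fin N)} {q : Fin N} : (Equiv.swap q (σ q) * σ) q = q := by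
  rw [Equiv.Perm.mul_apply, Equiv.swap_apply_right]

lemma excise_ne_q {σ : Perm (Fin N)} {q x : Fin N} (hx : x ≠ q) :
    (Equiv.swap q (σ q) * σ) x ≠ q := fun h =>
  hx ((Equiv.swap q (σ q) * σ).injective (h.trans excise_fixed.symm))

lemma orb_excise {σ : Perm (Fin N)} {q : Fin N} (hq : σ q ≠ q) {x : Fin N} (hx : x ≠ q) :
    orb (Equiv.swap q (σ q) * σ) x = (orb σ x).erase q := by
  set M := Equiv.swap q (σ q) * σ with hM
  ext z
  simp only [Finset.mem_erase]
  constructor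
  · intro hz
    obtain ⟨k, rfl⟩ := mem_orb_iff.1 hz
    induction k with
    | zero => exact ⟨hx, mem_orb_self x⟩
    | succ k ih =>
        obtain ⟨hw, hwo⟩ := ih (mem_orb_iff.2 ⟨k, rfl⟩)
        set w := (M ^ k) x with hwdef
        have hstep : (M ^ (k+1)) x = M w := by rw [pow_succ', Equiv.Perm.mul_apply]
        refine ⟨hstep ▸ excise_ne_q hw, ?_⟩
        rw [hstep, hM, Equiv.Perm.mul_apply]
        rcases eq_or_ne (σ w) q with hsw | hsw
        · rw [hsw, Equiv.swap_apply_left]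
          exact orb_closed (hsw ▸ orb_closed hwo)
        · rcases eq_or_ne (σ w) (σ q) with hsw2 | hsw2
          · exact absurd (σ.injective hsw2) hw
          · rw [Equiv.swap_apply_of_ne_of_ne hsw hsw2]
            exact orb_closed hwo
  · rintro ⟨hzq, hzo⟩
    obtain ⟨k, rfl⟩ := mem_orb_iff.1 hzo
    -- strong induction claim
    have key : ∀ k : ℕ, (σ ^ k) x ≠ q → (σ ^ k) x ∈ orb M x := by
      intro k
      induction k using Nat.strong_induction_on with
      | _ k ih =>
        match k with
        | 0 => exact fun _ => mem_orb_self x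
        | Nat.succ k =>
          intro hne
          have hstep : (σ ^ (k+1)) x = σ ((σ ^ k) x) := by
            rw [pow_succ', Equiv.Perm.mul_apply]
          rcases eq_or_ne ((σ ^ k) x) q with hw | hw
          · -- predecessor is q; go back one more step
            match k, hw with
            | 0, hw => exact absurd hw hx
            | Nat.succ j, hw =>
              have hstep2 : (σ ^ (j+1)) x = σ ((σ ^ j) x) := by
                rw [pow_succ', Equiv.Perm.mul_apply]
              have hu : (σ ^ j) x ≠ q := by
                intro h
                rw [h] at hstep2
                exact hq (hstep2.symm.trans hw)
              have humem : (σ ^ j) x ∈ orb M x := ih j (by omega) hu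
              have : M ((σ ^ j) x) = (σ ^ (j+2)) x := by
                rw [hM, Equiv.Perm.mul_apply, ← hstep2, hw, Equiv.swap_apply_left,
                  hstep, hw]
              exact this ▸ orb_closed humem
          · have hwo : (σ ^ k) x ∈ orb M x := ih k (by omega) hw
            have : M ((σ ^ k) x) = (σ ^ (k+1)) x := by
              rw [hM, Equiv.Perm.mul_apply, hstep]
              rcases eq_or_ne (σ ((σ ^ k) x)) (σ q) with h2 | h2
              · exact absurd (σ.injective h2) hw
              · exact Equiv.swap_apply_of_ne_of_ne (hstep ▸ hne) h2
            exact this ▸ orb_closed hwo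
    exact key k hzq

lemma orbSet_excise {σ : Perm (Fin N)} {q : Fin N} (hq : σ q ≠ q) :
    orbSet (Equiv.swap q (σ q) * σ) = insert {q} ((orbSet σ).image (·.erase q)) := by
  set M := Equiv.swap q (σ q) * σ with hM
  ext O
  simp only [Finset.mem_insert, Finset.mem_image, orbSet, Finset.mem_univ, true_and]
  constructor
  · rintro ⟨x, rfl⟩
    rcases eq_or_ne x q with rfl | hx
    · exact Or.inl (orb_fixed excise_fixed)
    · exact Or.inr ⟨orb σ x, ⟨x, rfl⟩, (orb_excise hq hx).symm⟩
  · rintro (rfl | ⟨P, ⟨x, rfl⟩, rfl⟩)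
    · exact ⟨q, orb_fixed excise_fixed⟩
    · rcases eq_or_ne x q with heq | hx
      · subst heq
        refine ⟨σ x, ?_⟩
        rw [orb_excise hq hq, orb_eq_of_mem (orb_closed (mem_orb_self x))]
      · exact ⟨x, orb_excise hq hx⟩

lemma card_orbSet_excise {σ : Perm (Fin N)} {q : Fin N} (hq : σ q ≠ q) :
    (orbSet (Equiv.swap q (σ q) * σ)).card = (orbSet σ).card + 1 := by
  rw [orbSet_excise hq]
  have hnotmem : ({q} : Finset (Fin N)) ∉ (orbSet σ).image (·.erase q) := by
    intro h
    obtain ⟨P, _, hP⟩ := Finset.mem_image.1 h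
    have : q ∈ P.erase q := hP.symm ▸ Finset.mem_singleton_self q
    exact Finset.notMem_erase q P this
  rw [Finset.card_insert_of_notMem hnotmem, Finset.card_image_of_injOn, Nat.add_comm]
  intro O₁ h₁ O₂ h₂ he
  simp only at he
  rcases Finset.decidableMem q O₁ with h1 | h1 <;> rcases Finset.decidableMem q O₂ with h2 | h2
  · rwa [Finset.erase_eq_of_notMem h1, Finset.erase_eq_of_notMem h2] at he
  · -- q ∈ O₂, q ∉ O₁
    exfalso
    obtain ⟨x, _, rfl⟩ := Finset.mem_image.1 h₂
    have hO2q : orb σ q = orb σ x := orb_eq_of_mem h2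
    have hσq : σ q ∈ orb σ x := hO2q ▸ orb_closed (mem_orb_self q)
    have : σ q ∈ O₁ := by
      rw [Finset.erase_eq_of_notMem h1] at he
      rw [he]
      exact Finset.mem_erase.2 ⟨hq, hσq⟩
    obtain ⟨y, _, rfl⟩ := Finset.mem_image.1 h₁
    have : orb σ y = orb σ x := by
      rw [← orb_eq_of_mem this, orb_eq_of_mem hσq]
    exact h1 (this ▸ h2)
  · exfalso
    obtain ⟨x, _, rfl⟩ := Finset.mem_image.1 h₁
    have hσq : σ q ∈ orb σ x := (orb_eq_of_mem h1) ▸ orb_closed (mem_orb_self q)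
    have : σ q ∈ O₂ := by
      rw [Finset.erase_eq_of_notMem h2] at he
      rw [← he]
      exact Finset.mem_erase.2 ⟨hq, hσq⟩
    obtain ⟨y, _, rfl⟩ := Finset.mem_image.1 h₂
    have : orb σ y = orb σ x := by
      rw [← orb_eq_of_mem this, orb_eq_of_mem hσq]
    exact h2 (this ▸ h1)
  · obtain ⟨x, _, rfl⟩ := Finset.mem_image.1 h₁
    obtain ⟨y, _, rfl⟩ := Finset.mem_image.1 h₂
    rw [← orb_eq_of_mem h1, ← orb_eq_of_mem h2]
end Excision

section Conj
variable {N N' : ℕ}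

lemma orb_conj {M : Perm (Fin N)} {σ' : Perm (Fin N')} {g : Fin N' → Fin N}
    (hcomm : ∀ y, M (g y) = g (σ' y)) (y : Fin N') :
    orb M (g y) = (orb σ' y).image g := by
  have hpow : ∀ k (z : Fin N'), (M ^ k) (g z) = g ((σ' ^ k) z) := by
    intro k
    induction k with
    | zero => intro z; rfl
    | succ k ih =>
        intro z
        rw [pow_succ', pow_succ', Equiv.Perm.mul_apply, Equiv.Perm.mul_apply, ih, hcomm]
  ext w
  simp only [Finset.mem_image, mem_orb_iff]
  constructor
  · rintro ⟨k, rfl⟩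
    exact ⟨(σ' ^ k) y, ⟨k, rfl⟩, (hpow k y).symm⟩
  · rintro ⟨z, ⟨k, rfl⟩, rfl⟩
    exact ⟨k, hpow k y⟩

lemma card_orbSet_conj {M : Perm (Fin N)} {σ' : Perm (Fin N')}
    {p q : Fin N} {g : Fin N' → Fin N}
    (hpq : p ≠ q) (hp : M p = p) (hqf : M q = q)
    (hginj : Function.Injective g)
    (hgp : ∀ y, g y ≠ p) (hgq : ∀ y, g y ≠ q)
    (hsurj : ∀ x : Fin N, x ≠ p → x ≠ q → ∃ y, g y = x)
    (hcomm : ∀ y, M (g y) = g (σ' y)) :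
    (orbSet M).card = (orbSet σ').card + 2 := by
  have hset : orbSet M = insert {p} (insert {q} ((orbSet σ').image (Finset.image g))) := by
    ext O
    simp only [orbSet, Finset.mem_insert, Finset.mem_image, Finset.mem_univ, true_and]
    constructor
    · rintro ⟨x, rfl⟩
      rcases eq_or_ne x p with rfl | hxp
      · exact Or.inl (orb_fixed hp)
      rcases eq_or_ne x q with rfl | hxq
      · exact Or.inr (Or.inl (orb_fixed hqf))
      obtain ⟨y, rfl⟩ := hsurj x hxp hxq
      exact Or.inr (Or.inr ⟨orb σ' y, ⟨y, rfl⟩, (orb_conj hcomm y).symm⟩)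
    · rintro (rfl | rfl | ⟨P, ⟨y, rfl⟩, rfl⟩)
      · exact ⟨p, orb_fixed hp⟩
      · exact ⟨q, orb_fixed hqf⟩
      · exact ⟨g y, orb_conj hcomm y⟩
  rw [hset]
  have h1 : ({p} : Finset (Fin N)) ∉ insert {q} ((orbSet σ').image (Finset.image g)) := by
    simp only [Finset.mem_insert, Finset.mem_image]
    rintro (h | ⟨P, hP, h⟩)
    · exact hpq (Finset.singleton_injective h)
    · obtain ⟨x, _, rfl⟩ := Finset.mem_image.1 hP
      have : p ∈ (orb σ' x).image g := h.symm ▸ Finset.mem_singleton_self p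
      obtain ⟨y, _, hy⟩ := Finset.mem_image.1 this
      exact hgp y hy
  have h2 : ({q} : Finset (Fin N)) ∉ (orbSet σ').image (Finset.image g) := by
    intro h
    obtain ⟨P, hP, hp'⟩ := Finset.mem_image.1 h
    obtain ⟨x, _, rfl⟩ := Finset.mem_image.1 hP
    have : q ∈ (orb σ' x).image g := hp'.symm ▸ Finset.mem_singleton_self q
    obtain ⟨y, _, hy⟩ := Finset.mem_image.1 this
    exact hgq y hy
  rw [Finset.card_insert_of_notMem h1, Finset.card_insert_of_notMem h2,
    Finset.card_image_of_injective _ (Finset.image_injective hginj)]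
end Conj

lemma finRotate_val {n : ℕ} (hn : 0 < n) (a : Fin n) :
    ((finRotate n a : Fin n) : ℕ) = ((a : ℕ) + 1) % n := by
  match n, hn with
  | (m+1), _ =>
    rw [finRotate_succ_apply, Fin.val_add]
    rw [Fin.val_one', Nat.add_mod_mod]

lemma mod_succ_of_lt {a n : ℕ} (h : a < n) : (a + 1) % n = if a + 1 = n then 0 else a + 1 := by
  split
  · simp [*]
  · exact Nat.mod_eq_of_lt (by omega)

set_option maxHeartbeats 1000000 in
lemma main_even : ∀ n : ℕ, Even n → ∀ τ : Perm (Fin n), (∀ a, τ a ≠ a ∧ τ (τ a) = a) →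
    cycleCount τ + cycleCount (τ⁻¹ * finRotate n) = n + 1 →
    ∀ a : Fin n, (a : ℕ) % 2 = (((τ⁻¹ * finRotate n) a : Fin n) : ℕ) % 2 := by
  intro n
  induction n using Nat.strong_induction_on with
  | _ n IH =>
    intro heven τ hpair hnc
    have hinv : τ⁻¹ = τ := invol_inv_eq (fun a => (hpair a).2)
    have hKapp : ∀ a : Fin n, (τ⁻¹ * finRotate n) a = τ (finRotate n a) := by
      intro a; rw [Equiv.Perm.mul_apply, hinv]
    rcases Nat.lt_or_ge n 4 with hlt | hge
    · -- n = 0 or n = 2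
      have : n = 0 ∨ n = 2 := by
        rcases heven with ⟨r, hr⟩; omega
      rcases this with rfl | rfl
      · exact fun a => a.elim0
      · -- n = 2
        have h0 : τ 0 = 1 := by
          have h := (hpair 0).1
          have hv : (τ 0 : ℕ) < 2 := (τ 0).isLt
          have : (τ 0 : ℕ) ≠ 0 := fun hc => h (Fin.ext hc)
          exact Fin.ext (by omega)
        have h1 : τ 1 = 0 := by
          have := (hpair 0).2; rwa [h0] at this
        intro a
        have ha : a = 0 ∨ a = 1 := by
          have := a.isLt
          rcases Nat.lt_or_ge (a : ℕ) 1 with h | h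
          · exact Or.inl (Fin.ext (by omega))
          · exact Or.inr (Fin.ext (by omega))
        have hf0 : finRotate 2 (0 : Fin 2) = 1 := by decide
        have hf1 : finRotate 2 (1 : Fin 2) = 0 := by decide
        rcases ha with rfl | rfl
        · rw [hKapp, hf0, h1]
        · rw [hKapp, hf1, h0]
    · -- main step, n ≥ 4
      have hn0 : 0 < n := by omega
      have hrotv : ∀ a : Fin n, ((finRotate n a : Fin n) : ℕ) = ((a : ℕ) + 1) % n :=
        finRotate_val hn0
      set K : Perm (Fin n) := τ⁻¹ * finRotate n with hKdef
      have h2c : 2 * cycleCount τ = n :=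
        two_mul_cycleCount (fun a => (hpair a).1) (fun a => (hpair a).2)
      -- find a fixed point p of K with p ≠ n - 1
      have hfix2 : ∃ p : Fin n, K p = p ∧ (p : ℕ) ≠ n - 1 := by
        have hsing := card_singleton_orbs_ge K
        have hcK : (orbSet K).card = n / 2 + 1 := by
          have := cycleCount_eq_card_orbSet K
          omega
        have hf2 : 2 ≤ ((orbSet K).filter (fun O => O.card = 1)).card := by omega
        obtain ⟨x, y, hx, hy, hxy⟩ := exists_two_fixed hf2
        rcases eq_or_ne ((x : Fin n) : ℕ) (n - 1) with hxe | hxe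
        · refine ⟨y, hy, fun hc => hxy (Fin.ext (hxe.trans hc.symm))⟩
        · exact ⟨x, hx, hxe⟩
      obtain ⟨p, hKp, hpn1⟩ := hfix2
      set P : ℕ := (p : ℕ) with hPdef
      have hPlt : P + 1 < n := by have := p.isLt; omega
      set q : Fin n := ⟨P + 1, hPlt⟩ with hqdef
      have hfrp : finRotate n p = q := by
        apply Fin.ext
        rw [hrotv]
        exact Nat.mod_eq_of_lt hPlt
      have hτq : τ q = p := by
        have := hKapp p
        rw [hfrp, hKp] at this
        exact this.symm
      have hτp : τ p = q := by rw [← hτq, (hpair q).2]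
      have hpq : p ≠ q := by
        intro h
        have := congrArg Fin.val h
        simp only [hqdef] at this
        omega
      -- K q ≠ q and K q ≠ p
      have hfrq : ((finRotate n q : Fin n) : ℕ) = (P + 2) % n := by
        rw [hrotv]
      have hKq_ne : K q ≠ q := by
        intro h
        rw [hKapp] at h
        have h2 : finRotate n q = τ q := τ.injective (h.trans ((hpair q).2).symm)
        rw [hτq] at h2
        have := congrArg Fin.val h2
        rw [hfrq, mod_succ_of_lt hPlt] at this
        split at this <;> omega
      have hKq_ne_p : K q ≠ p := by
        intro h
        rw [hKapp] at h
        rw [← hτq] at h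
        have := τ.injective h
        have := congrArg Fin.val this
        rw [hfrq, mod_succ_of_lt hPlt] at this
        simp only [hqdef] at this
        split at this <;> omega
      set M : Perm (Fin n) := Equiv.swap q (K q) * K with hMdef
      have hMq : M q = q := excise_fixed
      have hMp : M p = p := by
        rw [hMdef, Equiv.Perm.mul_apply, hKp,
          Equiv.swap_apply_of_ne_of_ne hpq (fun h => hKq_ne_p h.symm)]
      -- the shrink map g
      have hm0 : 0 < n - 2 := by omega
      have hPm : P + 1 ≤ n - 2 ∨ True := Or.inr trivial
      set g : Fin (n - 2) → Fin n := fun y =>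
        ⟨if (y : ℕ) < P then (y : ℕ) else (y : ℕ) + 2, by
          have := y.isLt; split <;> omega⟩ with hgdef
      have hgv : ∀ y : Fin (n - 2), ((g y : Fin n) : ℕ) =
          if (y : ℕ) < P then (y : ℕ) else (y : ℕ) + 2 := fun y => rfl
      have hg_ne_p : ∀ y, g y ≠ p := by
        intro y h
        have := congrArg Fin.val h
        rw [hgv] at this
        have := y.isLt
        split at * <;> omega
      have hg_ne_q : ∀ y, g y ≠ q := by
        intro y h
        have := congrArg Fin.val h
        rw [hgv] at this
        simp only [hqdef] at this
        have := y.isLt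
        split at * <;> omega
      have hg_inj : Function.Injective g := by
        intro a b h
        have := congrArg Fin.val h
        rw [hgv, hgv] at this
        apply Fin.ext
        split at this <;> split at this <;> omega
      have hg_surj : ∀ x : Fin n, x ≠ p → x ≠ q → ∃ y, g y = x := by
        intro x hxp hxq
        have hxv := x.isLt
        have hxvp : (x : ℕ) ≠ P := fun h => hxp (Fin.ext h)
        have hxvq : (x : ℕ) ≠ P + 1 := fun h => hxq (Fin.ext h)
        rcases Nat.lt_or_ge (x : ℕ) P with h | h
        · exact ⟨⟨(x : ℕ), by omega⟩, Fin.ext (by rw [hgv]; simp only; split <;> omega)⟩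
        · refine ⟨⟨(x : ℕ) - 2, by omega⟩, Fin.ext ?_⟩
          rw [hgv]
          simp only
          split <;> omega
      have hg_parity : ∀ y, ((g y : Fin n) : ℕ) % 2 = (y : ℕ) % 2 := by
        intro y
        rw [hgv]
        split <;> omega
      -- τ-invariance off {p,q}
      have hτ_inv : ∀ x : Fin n, x ≠ p → x ≠ q → τ x ≠ p ∧ τ x ≠ q := by
        intro x hxp hxq
        constructor
        · intro h
          rw [← hτq] at h
          exact hxq (τ.injective h)
        · intro h
          rw [← hτp] at h
          exact hxp (τ.injective h)
      -- the map h (inverse of g off {p,q})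
      set hm : Fin n → Fin (n - 2) := fun x =>
        ⟨(if (x : ℕ) < P then (x : ℕ) else (x : ℕ) - 2) % (n - 2), Nat.mod_lt _ hm0⟩
        with hhmdef
      have hgh : ∀ x : Fin n, x ≠ p → x ≠ q → g (hm x) = x := by
        intro x hxp hxq
        obtain ⟨y, rfl⟩ := hg_surj x hxp hxq
        congr 1
        apply Fin.ext
        simp only [hhmdef, hgv]
        have hy := y.isLt
        split_ifs <;> rw [Nat.mod_eq_of_lt (by omega)] <;> omega
      -- τ' on Fin (n-2)
      have hff : ∀ y : Fin (n - 2), hm (τ (g (hm (τ (g y))))) = y := by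
        intro y
        obtain ⟨hp1, hq1⟩ := hτ_inv (g y) (hg_ne_p y) (hg_ne_q y)
        rw [hgh _ hp1 hq1, (hpair (g y)).2]
        have : g (hm (g y)) = g y := hgh _ (hg_ne_p y) (hg_ne_q y)
        have := hg_inj this
        exact this
      set τ' : Perm (Fin (n - 2)) :=
        ⟨fun y => hm (τ (g y)), fun y => hm (τ (g y)), hff, hff⟩ with hτ'def
      have hτ'app : ∀ y, τ' y = hm (τ (g y)) := fun y => rfl
      have hgτ' : ∀ y, g (τ' y) = τ (g y) := by
        intro y
        obtain ⟨hp1, hq1⟩ := hτ_inv (g y) (hg_ne_p y) (hg_ne_q y)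
        rw [hτ'app, hgh _ hp1 hq1]
      have hτ'pair : ∀ y, τ' y ≠ y ∧ τ' (τ' y) = y := by
        intro y
        constructor
        · intro h
          have : g (τ' y) = g y := congrArg g h
          rw [hgτ'] at this
          exact (hpair (g y)).1 this
        · exact hff y
      -- arithmetic: commutation of g with rotations
      have harith : ∀ y : Fin (n - 2),
          (((finRotate n (g y) : Fin n) : ℕ) ≠ P →
            ((g (finRotate (n - 2) y) : Fin n) : ℕ) = ((finRotate n (g y) : Fin n) : ℕ)) ∧
          (((finRotate n (g y) : Fin n) : ℕ) = P →
            ((g (finRotate (n - 2) y) : Fin n) : ℕ) = ((finRotate n q : Fin n) : ℕ)) := by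
        intro y
        have hy := y.isLt
        have e1 : ((finRotate (n - 2) y : Fin (n - 2)) : ℕ) =
            if (y : ℕ) + 1 = n - 2 then 0 else (y : ℕ) + 1 := by
          rw [finRotate_val hm0, mod_succ_of_lt hy]
        have hglt : (if (y : ℕ) < P then (y : ℕ) else (y : ℕ) + 2) < n := by
          split <;> omega
        have e2 : ((finRotate n (g y) : Fin n) : ℕ) =
            if (if (y : ℕ) < P then (y : ℕ) else (y : ℕ) + 2) + 1 = n then 0
            else (if (y : ℕ) < P then (y : ℕ) else (y : ℕ) + 2) + 1 := by
          rw [hrotv, hgv, mod_succ_of_lt hglt]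
        have e3 : ((finRotate n q : Fin n) : ℕ) = if P + 2 = n then 0 else P + 2 := by
          rw [hfrq, show P + 2 = P + 1 + 1 by omega, mod_succ_of_lt hPlt]
        constructor
        · intro hne
          rw [e2] at hne
          rw [hgv, e1, e2]
          split_ifs at hne ⊢ <;> omega
        · intro heq
          rw [e2] at heq
          rw [hgv, e1, e3]
          split_ifs at heq ⊢ <;> omega
      -- K' and the commutation M ∘ g = g ∘ K'
      have hinv' : τ'⁻¹ = τ' := invol_inv_eq (fun z => (hτ'pair z).2)
      have hK'app : ∀ y, (τ'⁻¹ * finRotate (n - 2)) y = τ' (finRotate (n - 2) y) := by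
        intro y; rw [Equiv.Perm.mul_apply, hinv']
      have hcomm : ∀ y, M (g y) = g ((τ'⁻¹ * finRotate (n - 2)) y) := by
        intro y
        rw [hK'app, hgτ']
        have hMgy : M (g y) = Equiv.swap q (K q) (K (g y)) := by rw [hMdef]; rfl
        rw [hMgy, hKapp (g y)]
        rcases eq_or_ne (finRotate n (g y)) p with hA | hA
        · rw [hA, hτp, Equiv.swap_apply_left]
          have hval := (harith y).2 (by rw [hA, hPdef])
          have hfin : g (finRotate (n - 2) y) = finRotate n q := Fin.ext hval
          rw [hfin, hKapp q]
        · have hvalne : ((finRotate n (g y) : Fin n) : ℕ) ≠ P := fun h => hA (Fin.ext h)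
          have hfin : g (finRotate (n - 2) y) = finRotate n (g y) :=
            Fin.ext ((harith y).1 hvalne)
          rw [hfin]
          apply Equiv.swap_apply_of_ne_of_ne
          · intro h
            rw [← hτp] at h
            exact hA (τ.injective h)
          · intro h
            rw [hKapp q] at h
            exact hg_ne_q y ((finRotate n).injective (τ.injective h))
      -- counting
      have hcard1 : (orbSet M).card = (orbSet K).card + 1 := by
        rw [hMdef]; exact card_orbSet_excise hKq_ne
      have hcard2 : (orbSet M).card = (orbSet (τ'⁻¹ * finRotate (n - 2))).card + 2 :=
        card_orbSet_conj hpq hMp hMq hg_inj hg_ne_p hg_ne_q hg_surj hcomm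
      have h2c' : 2 * cycleCount τ' = n - 2 :=
        two_mul_cycleCount (fun y => (hτ'pair y).1) (fun y => (hτ'pair y).2)
      have hnc' : cycleCount τ' + cycleCount (τ'⁻¹ * finRotate (n - 2)) = (n - 2) + 1 := by
        have hek := cycleCount_eq_card_orbSet K
        have hek' := cycleCount_eq_card_orbSet (τ'⁻¹ * finRotate (n - 2))
        omega
      have heven' : Even (n - 2) := by
        obtain ⟨r, hr⟩ := heven
        exact ⟨r - 1, by omega⟩
      have hIH := IH (n - 2) (by omega) heven' τ' hτ'pair hnc'
      -- parity of M
      have hMparity : ∀ x : Fin n, ((M x : Fin n) : ℕ) % 2 = (x : ℕ) % 2 := by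
        intro x
        rcases eq_or_ne x p with rfl | hxp
        · rw [hMp]
        rcases eq_or_ne x q with rfl | hxq
        · rw [hMq]
        obtain ⟨y, rfl⟩ := hg_surj x hxp hxq
        rw [hcomm y, hg_parity, ← hIH y, ← hg_parity y]
      have hnmod : n % 2 = 0 := Nat.even_iff.1 heven
      -- parity of K q
      have hKqpar : ((K q : Fin n) : ℕ) % 2 = (q : ℕ) % 2 := by
        have hx0lt : (P + n - 1) % n < n := Nat.mod_lt _ hn0
        set x₀ : Fin n := ⟨(P + n - 1) % n, hx0lt⟩ with hx₀def
        have hx₀v : (x₀ : ℕ) = if P = 0 then n - 1 else P - 1 := by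
          simp only [hx₀def]
          split
          · rw [show P + n - 1 = n - 1 by omega]
            exact Nat.mod_eq_of_lt (by omega)
          · rw [show P + n - 1 = (P - 1) + n by omega, Nat.add_mod_right]
            exact Nat.mod_eq_of_lt (by omega)
        have hfrx₀ : finRotate n x₀ = p := by
          apply Fin.ext
          rw [hrotv]
          rw [show ((x₀ : Fin n) : ℕ) = (x₀ : ℕ) from rfl, hx₀v]
          split
          · rw [show n - 1 + 1 = n by omega, Nat.mod_self]; omega
          · rw [show P - 1 + 1 = P by omega]
            exact Nat.mod_eq_of_lt (by omega)
        have hKx₀ : K x₀ = q := by rw [hKapp, hfrx₀, hτp]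
        have hx₀p : x₀ ≠ p := by
          intro h
          have := congrArg Fin.val h
          rw [hx₀v] at this
          split at this <;> omega
        have hx₀q : x₀ ≠ q := by
          intro h
          have := congrArg Fin.val h
          rw [hx₀v] at this
          simp only [hqdef] at this
          split at this <;> omega
        have hMx₀ : M x₀ = K q := by
          rw [hMdef, Equiv.Perm.mul_apply, hKx₀, Equiv.swap_apply_left]
        have := hMparity x₀
        rw [hMx₀, hx₀v] at this
        rw [this]
        simp only [hqdef]
        split <;> omega
      -- conclusion
      intro a
      have hKswap : K a = Equiv.swap q (K q) (M a) := by
        have hMa : M a = Equiv.swap q (K q) (K a) := by rw [hMdef]; rfl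
        rw [hMa, Equiv.swap_apply_self]
      rw [hKswap]
      rcases eq_or_ne (M a) q with h | h
      · rw [h, Equiv.swap_apply_left]
        have h1 := hMparity a
        rw [h] at h1
        omega
      · rcases eq_or_ne (M a) (K q) with h2 | h2
        · rw [h2, Equiv.swap_apply_right]
          have h1 := hMparity a
          rw [h2] at h1
          omega
        · rw [Equiv.swap_apply_of_ne_of_ne h h2]
          exact (hMparity a).symm

/-- The Kreweras complement `K(τ) = τ⁻¹γₙ` of a non-crossing pairing (`n` even)
is parity preserving. -/
theorem stmt5 {n : ℕ} (hn : Even n) (τ : Equiv.Perm (Fin n))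
    (hpair : ∀ a, τ a ≠ a ∧ τ (τ a) = a)
    (hnc : cycleCount τ + cycleCount (τ⁻¹ * finRotate n) = n + 1) :
    ∀ a : Fin n, (a : ℕ) % 2 = (((τ⁻¹ * finRotate n) a : ℕ)) % 2 :=
  main_even n hn τ hpair hnc
end
end

section
/- Let m, n ≥ 1 and let τ ∈ S_{m+n} be (m,n)-connected, i.e., there exist i ≤ m and j > m such that τ(i) = j or τ(j) = i. Then #(τ) + #(τ⁻¹γ_{m,n}) ≤ m + n, where γ_{m,n} = (1,2,...,m)(m+1,m+2,...,m+n). -/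
open Equiv MeasureTheory ProbabilityTheory Filter

noncomputable section

set_option linter.unusedSectionVars false

variable {α : Type*} [Fintype α] [DecidableEq α]

noncomputable section

def qcc (σ : Perm α) : ℕ := Nat.card (Quotient (Perm.SameCycle.setoid σ))

/-- extend a setoid by merging the classes of x and y -/
def epair (s : Setoid α) (x y : α) : Setoid α where
  r z w := s.r z w ∨ ((s.r z x ∨ s.r z y) ∧ (s.r w x ∨ s.r w y))
  iseqv := by
    constructor
    · exact fun z => Or.inl (s.refl z)
    · rintro z w (h | ⟨hz, hw⟩)
      · exact Or.inl (s.symm h)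
      · exact Or.inr ⟨hw, hz⟩
    · rintro z w v (h | ⟨hz, hw⟩) (h' | ⟨hw', hv⟩)
      · exact Or.inl (s.trans h h')
      · exact Or.inr ⟨hw'.imp (s.trans h) (s.trans h), hv⟩
      · exact Or.inr ⟨hz, hw.imp (fun h2 => s.trans (s.symm h') h2) (fun h2 => s.trans (s.symm h') h2)⟩
      · exact Or.inr ⟨hz, hv⟩

theorem epair_rel_left (s : Setoid α) (x y : α) : (epair s x y).r x y :=
  Or.inr ⟨Or.inl (s.refl x), Or.inr (s.refl y)⟩

theorem le_epair (s : Setoid α) (x y : α) : ∀ z w, s.r z w → (epair s x y).r z w :=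
  fun _ _ h => Or.inl h

theorem epair_le (s : Setoid α) {x y : α} (h : s.r x y) :
    ∀ z w, (epair s x y).r z w → s.r z w := by
  rintro z w (h' | ⟨hz, hw⟩)
  · exact h'
  · have hz' : s.r z x := hz.elim id (fun h2 => s.trans h2 (s.symm h))
    have hw' : s.r w x := hw.elim id (fun h2 => s.trans h2 (s.symm h))
    exact s.trans hz' (s.symm hw')

theorem card_quot_le_of_le {s t : Setoid α} (h : ∀ z w, s.r z w → t.r z w) :
    Nat.card (Quotient t) ≤ Nat.card (Quotient s) := by
  apply Nat.card_le_card_of_surjective (Quot.map id h)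
  rintro ⟨z⟩
  exact ⟨Quot.mk _ z, rfl⟩

theorem card_quot_eq_of_eq {s t : Setoid α} (h : ∀ z w, s.r z w ↔ t.r z w) :
    Nat.card (Quotient s) = Nat.card (Quotient t) :=
  le_antisymm (card_quot_le_of_le fun z w hh => (h z w).2 hh)
    (card_quot_le_of_le fun z w hh => (h z w).1 hh)

theorem card_epair (s : Setoid α) (x y : α) :
    Nat.card (Quotient s) ≤ Nat.card (Quotient (epair s x y)) + 1 := by
  classical
  have h1 : Nat.card (Quotient (epair s x y) ⊕ Unit)
      = Nat.card (Quotient (epair s x y)) + 1 := by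
    rw [Nat.card_sum]; simp
  rw [← h1]
  apply Nat.card_le_card_of_injective
    (Quot.lift (fun z => if s.r z y ∧ ¬ s.r z x then (Sum.inr () : Quotient (epair s x y) ⊕ Unit)
        else Sum.inl (Quot.mk _ z)) ?_)
  · rintro ⟨z⟩ ⟨w⟩ hzw
    by_cases hz : s.r z y ∧ ¬ s.r z x <;> by_cases hw : s.r w y ∧ ¬ s.r w x <;>
      simp only [hz, hw, if_pos, if_neg, if_true, if_false, reduceIte] at hzw
    · exact Quot.sound (s.trans hz.1 (s.symm hw.1))
    · exact absurd hzw (by simp)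
    · exact absurd hzw (by simp)
    · -- both mapped to inl; hzw : Sum.inl _ = Sum.inl _
      have h2 : Quot.mk (epair s x y).r z = Quot.mk (epair s x y).r w := by
        injection hzw
      have h3 : (epair s x y).r z w := Quotient.exact h2
      rcases h3 with h3 | ⟨h3, h4⟩
      · exact Quot.sound h3
      · push_neg at hz hw
        have hzx : s.r z x := h3.elim id hz
        have hwx : s.r w x := h4.elim id hw
        exact Quot.sound (s.trans hzx (s.symm hwx))
  · rintro z w heq
    have heq : s.r z w := heq
    by_cases hzy : s.r z y ∧ ¬ s.r z x
    · have hwy : s.r w y ∧ ¬ s.r w x :=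
        ⟨s.trans (s.symm heq) hzy.1, fun hc => hzy.2 (s.trans heq hc)⟩
      simp [hzy, hwy]
    · have hwy : ¬(s.r w y ∧ ¬ s.r w x) := fun hc =>
        hzy ⟨s.trans heq hc.1, fun hc2 => hc.2 (s.trans (s.symm heq) hc2)⟩
      simp only [hzy, hwy, if_false, reduceIte]
      exact congrArg Sum.inl (Quot.sound (Or.inl heq))

end

section PermPart
variable {α : Type*} [Fintype α] [DecidableEq α]

/-- If `e` relates `σ z` to `z` for every `z`, then `e` contains `SameCycle σ`. -/
theorem sameCycle_le_of_step {σ : Perm α} {e : Setoid α} (h : ∀ z, e.r (σ z) z) :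
    ∀ z w, σ.SameCycle z w → e.r z w := by
  have hpow : ∀ (k : ℕ) (z : α), e.r ((σ ^ k) z) z := by
    intro k
    induction k with
    | zero => intro z; exact e.refl z
    | succ k ih =>
      intro z
      have : (σ ^ (k+1)) z = σ ((σ ^ k) z) := by
        rw [pow_succ']; rfl
      rw [this]
      exact e.trans (h _) (ih z)
  have hinv : ∀ z, e.r (σ⁻¹ z) z := by
    intro z
    have := h (σ⁻¹ z)
    rw [show σ (σ⁻¹ z) = z from σ.apply_symm_apply z] at this
    exact e.symm this
  have hpowinv : ∀ (k : ℕ) (z : α), e.r ((σ⁻¹ ^ k) z) z := by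
    intro k
    induction k with
    | zero => intro z; exact e.refl z
    | succ k ih =>
      intro z
      have : (σ⁻¹ ^ (k+1)) z = σ⁻¹ ((σ⁻¹ ^ k) z) := by
        rw [pow_succ']; rfl
      rw [this]
      exact e.trans (hinv _) (ih z)
  rintro z w ⟨i, hi⟩
  rcases i with k | k
  · rw [Int.ofNat_eq_coe, zpow_natCast] at hi
    exact e.symm (hi ▸ hpow k z)
  · rw [zpow_negSucc, ← inv_pow] at hi
    exact e.symm (hi ▸ hpowinv (k+1) z)

/-- The orbit setoid of a set of permutations. -/
def orel (S : Set (Perm α)) : Setoid α where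
  r z w := ∃ g ∈ Subgroup.closure S, g w = z
  iseqv := by
    constructor
    · exact fun z => ⟨1, Subgroup.one_mem _, rfl⟩
    · rintro z w ⟨g, hg, rfl⟩
      exact ⟨g⁻¹, Subgroup.inv_mem _ hg, g.symm_apply_apply w⟩
    · rintro z w v ⟨g, hg, rfl⟩ ⟨g', hg', rfl⟩
      exact ⟨g * g', Subgroup.mul_mem _ hg hg', rfl⟩

noncomputable def ocount (S : Set (Perm α)) : ℕ := Nat.card (Quotient (orel S))

/-- If `e` relates `g z` to `z` for every generator `g ∈ S`, then `e` contains `orel S`. -/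
theorem orel_le_of_step {S : Set (Perm α)} {e : Setoid α}
    (h : ∀ g ∈ S, ∀ z, e.r (g z) z) : ∀ z w, (orel S).r z w → e.r z w := by
  let K : Subgroup (Perm α) :=
    { carrier := {g | ∀ z, e.r (g z) z}
      one_mem' := fun z => e.refl z
      mul_mem' := by
        intro g g' hg hg' z
        exact e.trans (hg (g' z)) (hg' z)
      inv_mem' := by
        intro g hg z
        have := hg (g⁻¹ z)
        rw [show g (g⁻¹ z) = z from g.apply_symm_apply z] at this
        exact e.symm this }
  have hK : Subgroup.closure S ≤ K := (Subgroup.closure_le K).2 h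
  rintro z w ⟨g, hg, rfl⟩
  exact hK hg w

theorem mem_orel_of_mem {S : Set (Perm α)} {g : Perm α} (hg : g ∈ S) (z : α) :
    (orel S).r (g z) z := ⟨g, Subgroup.subset_closure hg, rfl⟩

theorem sameCycle_le_orel {S : Set (Perm α)} {g : Perm α} (hg : g ∈ S) :
    ∀ z w, g.SameCycle z w → (orel S).r z w :=
  sameCycle_le_of_step (fun z => mem_orel_of_mem hg z)

end PermPart

section SwapPart
variable {α : Type*} [Fintype α] [DecidableEq α]

theorem sameCycle_rel (σ : Perm α) (z : α) : σ.SameCycle z (σ z) := ⟨1, by simp⟩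

/-- One step of `swap x y * σ` stays within `epair (SameCycle σ) x y`. -/
theorem swap_mul_sameCycle_le (σ : Perm α) (x y : α) :
    ∀ z w, (Equiv.swap x y * σ).SameCycle z w →
      (epair (Perm.SameCycle.setoid σ) x y).r z w := by
  apply sameCycle_le_of_step
  intro z
  have happ : (Equiv.swap x y * σ) z = Equiv.swap x y (σ z) := rfl
  rw [happ]
  by_cases h1 : σ z = x
  · rw [h1, swap_apply_left]
    exact Or.inr ⟨Or.inr (Setoid.refl' _ y), Or.inl (h1 ▸ sameCycle_rel σ z)⟩
  by_cases h2 : σ z = y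
  · rw [h2, swap_apply_right]
    exact Or.inr ⟨Or.inl (Setoid.refl' _ x), Or.inr (h2 ▸ sameCycle_rel σ z)⟩
  · rw [swap_apply_of_ne_of_ne h1 h2]
    exact Or.inl ((sameCycle_rel σ z).symm)

/-- multiplying by a swap changes the cycle count by at most one (one direction). -/
theorem qcc_swap_mul_le (σ : Perm α) (x y : α) :
    qcc (Equiv.swap x y * σ) ≤ qcc σ + 1 := by
  calc qcc (Equiv.swap x y * σ)
      ≤ Nat.card (Quotient (epair (Perm.SameCycle.setoid (Equiv.swap x y * σ)) x y)) + 1 :=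
        card_epair _ x y
    _ ≤ qcc σ + 1 := by
        apply Nat.add_le_add_right
        apply card_quot_le_of_le
        intro z w h
        have := swap_mul_sameCycle_le (Equiv.swap x y * σ) x y z w
        rw [swap_mul_self_mul] at this
        exact this h

/-- If `x` and `y` are in different cycles of `σ`, multiplying by `swap x y` connects them. -/
theorem sameCycle_swap_mul_of_not (σ : Perm α) {x y : α} (h : ¬ σ.SameCycle x y) :
    (Equiv.swap x y * σ).SameCycle x y := by
  classical
  set σ' := Equiv.swap x y * σ with hσ'
  have hper : x ∈ Function.periodicPts σ :=
    ⟨orderOf σ, orderOf_pos σ, by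
      simp only [Function.IsPeriodicPt, Function.IsFixedPt, Equiv.Perm.iterate_eq_pow,
        pow_orderOf_eq_one]; rfl⟩
  set k := Function.minimalPeriod σ x with hk
  have hkpos : 0 < k := Function.minimalPeriod_pos_of_mem_periodicPts hper
  have hclaim : ∀ j, j < k → (σ' ^ j) x = (σ ^ j) x := by
    intro j
    induction j with
    | zero => intro _; rfl
    | succ j ih =>
      intro hj
      have hj' : j < k := Nat.lt_of_succ_lt hj
      have h1 : (σ' ^ (j+1)) x = σ' ((σ' ^ j) x) := by rw [pow_succ']; rfl
      have h2 : (σ ^ (j+1)) x = σ ((σ ^ j) x) := by rw [pow_succ']; rfl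
      rw [h1, ih hj', hσ', Equiv.Perm.mul_apply, ← h2]
      have hnx : (σ ^ (j+1)) x ≠ x := by
        intro hc
        have : Function.IsPeriodicPt σ (j+1) x := by
          simp only [Function.IsPeriodicPt, Function.IsFixedPt, Equiv.Perm.iterate_eq_pow]
          exact hc
        exact absurd (this.minimalPeriod_le (Nat.succ_pos j)) (by omega)
      have hny : (σ ^ (j+1)) x ≠ y := fun hc => h ⟨(j+1 : ℕ), by rw [zpow_natCast]; exact hc⟩
      rw [swap_apply_of_ne_of_ne hnx hny]
  have hk1 : (σ' ^ k) x = y := by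
    have hdecomp : (σ' ^ k) x = σ' ((σ' ^ (k-1)) x) := by
      conv_lhs => rw [show k = (k-1) + 1 by omega, pow_succ']
      rfl
    rw [hdecomp, hclaim (k-1) (by omega), hσ', Equiv.Perm.mul_apply]
    have : σ ((σ ^ (k-1)) x) = (σ ^ k) x := by
      rw [show k = (k-1)+1 by omega, pow_succ']; rfl
    rw [this]
    have hfix : (σ ^ k) x = x := by
      have := Function.isPeriodicPt_minimalPeriod σ x
      simpa only [Function.IsPeriodicPt, Function.IsFixedPt,
        Equiv.Perm.iterate_eq_pow, ← hk] using this
    rw [hfix, swap_apply_left]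
  exact ⟨(k : ℤ), by rw [zpow_natCast]; exact hk1⟩

/-- If `x ≠ y` are in the same cycle of `σ`, they are in different cycles of `swap x y * σ`. -/
theorem not_sameCycle_swap_mul (σ : Perm α) {x y : α} (hxy : x ≠ y) (h : σ.SameCycle x y) :
    ¬ (Equiv.swap x y * σ).SameCycle x y := by
  classical
  set σ' := Equiv.swap x y * σ with hσ'
  obtain ⟨i, _, hi⟩ := h.exists_pow_eq'
  have hex : ∃ n, (σ ^ n) x = y := ⟨i, hi⟩
  set d := Nat.find hex with hd
  have hdspec : (σ ^ d) x = y := Nat.find_spec hex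
  have hdpos : 0 < d := by
    rcases Nat.eq_zero_or_pos d with h0 | h0
    · exfalso; apply hxy; rw [← hdspec, h0, pow_zero]; rfl
    · exact h0
  have hclaim : ∀ j, ∃ r, r < d ∧ (σ' ^ j) x = (σ ^ r) x := by
    intro j
    induction j with
    | zero => exact ⟨0, hdpos, rfl⟩
    | succ j ih =>
      obtain ⟨r, hr, hrj⟩ := ih
      have h1 : (σ' ^ (j+1)) x = σ' ((σ' ^ j) x) := by rw [pow_succ']; rfl
      have h2 : σ ((σ ^ r) x) = (σ ^ (r+1)) x := by rw [pow_succ']; rfl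
      rw [h1, hrj, hσ', Equiv.Perm.mul_apply, h2]
      by_cases hcase : r + 1 = d
      · rw [hcase, hdspec, swap_apply_right]
        exact ⟨0, hdpos, rfl⟩
      · have hrd : r + 1 < d := by omega
        have hny : (σ ^ (r+1)) x ≠ y := Nat.find_min hex hrd
        have hnx : (σ ^ (r+1)) x ≠ x := by
          intro hc
          have : (σ ^ (d - (r+1))) ((σ ^ (r+1)) x) = (σ ^ d) x := by
            rw [← Equiv.Perm.mul_apply, ← pow_add, Nat.sub_add_cancel hrd.le]
          rw [hc, hdspec] at this
          exact Nat.find_min hex (show d - (r+1) < d by omega) this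
        rw [swap_apply_of_ne_of_ne hnx hny]
        exact ⟨r + 1, hrd, rfl⟩
  intro hcon
  obtain ⟨i, _, hi⟩ := hcon.exists_pow_eq'
  obtain ⟨r, hr, hrj⟩ := hclaim i
  rw [hrj] at hi
  exact Nat.find_min hex hr hi

end SwapPart

section CountPart
variable {α : Type*} [Fintype α] [DecidableEq α]

theorem sameCycle_le_swap_mul {σ : Perm α} {x y : α} (h : ¬ σ.SameCycle x y) :
    ∀ z w, σ.SameCycle z w → (Equiv.swap x y * σ).SameCycle z w := by
  have hxy' : (Equiv.swap x y * σ).SameCycle x y := sameCycle_swap_mul_of_not σ h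
  intro z w hzw
  have h1 := swap_mul_sameCycle_le (Equiv.swap x y * σ) x y z w
  rw [swap_mul_self_mul] at h1
  exact epair_le (Perm.SameCycle.setoid (Equiv.swap x y * σ)) hxy' z w (h1 hzw)

theorem qcc_swap_mul_of_not {σ : Perm α} {x y : α} (h : ¬ σ.SameCycle x y) :
    qcc (Equiv.swap x y * σ) + 1 ≤ qcc σ := by
  classical
  set σ' := Equiv.swap x y * σ with hσ'
  have hxy' : σ'.SameCycle x y := sameCycle_swap_mul_of_not σ h
  have hle : ∀ z w, σ.SameCycle z w → σ'.SameCycle z w := sameCycle_le_swap_mul h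
  -- the lifted map
  have hwd : ∀ z w, (Perm.SameCycle.setoid σ').r z w →
      (if σ.SameCycle z y then (Quot.mk (Perm.SameCycle.setoid σ).r x)
        else Quot.mk (Perm.SameCycle.setoid σ).r z) =
      (if σ.SameCycle w y then (Quot.mk (Perm.SameCycle.setoid σ).r x)
        else Quot.mk (Perm.SameCycle.setoid σ).r w) := by
    intro z w hzw
    have key : ∀ v : α, (σ.SameCycle v x ∨ σ.SameCycle v y) →
        (if σ.SameCycle v y then (Quot.mk (Perm.SameCycle.setoid σ).r x)
          else Quot.mk (Perm.SameCycle.setoid σ).r v) = Quot.mk _ x := by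
      intro v hv
      by_cases hvy : σ.SameCycle v y
      · simp [hvy]
      · have hvx : σ.SameCycle v x := hv.resolve_right hvy
        simp only [hvy, if_false, reduceIte]
        exact Quot.sound hvx
    rcases swap_mul_sameCycle_le σ x y z w hzw with h1 | ⟨h1, h2⟩
    · by_cases hzy : σ.SameCycle z y
      · have hwy : σ.SameCycle w y := (h1.symm).trans hzy
        simp [hzy, hwy]
      · have hwy : ¬ σ.SameCycle w y := fun hc => hzy (h1.trans hc)
        simp only [hzy, hwy, if_false, reduceIte]
        exact Quot.sound h1
    · rw [key z h1, key w h2]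
  set f : Quotient (Perm.SameCycle.setoid σ') → Quotient (Perm.SameCycle.setoid σ) :=
    Quot.lift _ hwd with hf
  have hrange : ∀ c, f c ≠ Quot.mk _ y := by
    rintro ⟨z⟩ hc
    change (if σ.SameCycle z y then _ else _) = _ at hc
    by_cases hzy : σ.SameCycle z y
    · simp only [hzy, if_true, reduceIte] at hc
      exact h (Quotient.exact hc)
    · simp only [hzy, if_false, reduceIte] at hc
      exact hzy (Quotient.exact hc)
  have hinj : Function.Injective f := by
    rintro ⟨z⟩ ⟨w⟩ hc
    change (if σ.SameCycle z y then _ else _) = (if σ.SameCycle w y then _ else _) at hc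
    apply Quot.sound
    show σ'.SameCycle z w
    by_cases hzy : σ.SameCycle z y <;> by_cases hwy : σ.SameCycle w y <;>
      simp only [hzy, hwy, if_true, if_false, reduceIte] at hc
    · exact (hle _ _ hzy).trans (hle _ _ hwy).symm
    · have hwx : σ.SameCycle w x := (Quotient.exact hc).symm
      exact (hle _ _ hzy).trans (hxy'.symm.trans (hle _ _ hwx).symm)
    · have hzx : σ.SameCycle z x := Quotient.exact hc
      exact (hle _ _ hzx).trans (hxy'.trans (hle _ _ hwy).symm)
    · exact hle _ _ (Quotient.exact hc)
  -- package into an injection from the sum type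
  have hinj2 : Function.Injective
      (Sum.elim f (fun _ : Unit => Quot.mk (Perm.SameCycle.setoid σ).r y)) := by
    rintro (c | ⟨⟩) (c' | ⟨⟩) hcc
    · rw [hinj hcc]
    · exact absurd hcc (hrange c)
    · exact absurd hcc.symm (hrange c')
    · rfl
  have := Nat.card_le_card_of_injective _ hinj2
  rw [Nat.card_sum] at this
  simpa [qcc] using this

theorem qcc_swap_mul_of_same {σ : Perm α} {x y : α} (hxy : x ≠ y) (h : σ.SameCycle x y) :
    qcc σ + 1 ≤ qcc (Equiv.swap x y * σ) := by
  have h1 : ¬ (Equiv.swap x y * σ).SameCycle x y := not_sameCycle_swap_mul σ hxy h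
  have := qcc_swap_mul_of_not h1
  rwa [swap_mul_self_mul] at this

theorem qcc_inv (σ : Perm α) : qcc σ⁻¹ = qcc σ :=
  card_quot_eq_of_eq fun z w => Equiv.Perm.sameCycle_inv

theorem qcc_mul_swap_eq (σ : Perm α) (x y : α) :
    qcc (σ * Equiv.swap x y) = qcc (Equiv.swap x y * σ⁻¹) := by
  have : σ * Equiv.swap x y = (Equiv.swap x y * σ⁻¹)⁻¹ := by
    rw [mul_inv_rev, inv_inv, swap_inv]
  rw [this, qcc_inv]

theorem qcc_mul_swap_le (σ : Perm α) (x y : α) :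
    qcc (σ * Equiv.swap x y) ≤ qcc σ + 1 := by
  rw [qcc_mul_swap_eq]
  calc qcc (Equiv.swap x y * σ⁻¹) ≤ qcc σ⁻¹ + 1 := qcc_swap_mul_le σ⁻¹ x y
    _ = qcc σ + 1 := by rw [qcc_inv]

theorem qcc_mul_swap_of_not {σ : Perm α} {x y : α} (h : ¬ σ.SameCycle x y) :
    qcc (σ * Equiv.swap x y) + 1 ≤ qcc σ := by
  rw [qcc_mul_swap_eq]
  have h' : ¬ σ⁻¹.SameCycle x y := fun hc => h (Equiv.Perm.sameCycle_inv.1 hc)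
  calc qcc (Equiv.swap x y * σ⁻¹) + 1 ≤ qcc σ⁻¹ := qcc_swap_mul_of_not h'
    _ = qcc σ := qcc_inv σ

end CountPart

section OrbitPart
variable {α : Type*} [Fintype α] [DecidableEq α]

theorem quot_mk_surj (s : Setoid α) : Function.Surjective (Quot.mk s.r) := by
  rintro ⟨z⟩; exact ⟨z, rfl⟩

theorem qcc_le_card (σ : Perm α) : qcc σ ≤ Fintype.card α := by
  have := Nat.card_le_card_of_surjective _ (quot_mk_surj (Perm.SameCycle.setoid σ))
  exact le_of_le_of_eq this Nat.card_eq_fintype_card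

theorem eq_one_of_card_le_qcc {σ : Perm α} (h : Fintype.card α ≤ qcc σ) : σ = 1 := by
  have hbij : Function.Bijective (Quot.mk (Perm.SameCycle.setoid σ).r) :=
    (quot_mk_surj _).bijective_of_nat_card_le (Nat.card_eq_fintype_card.trans_le h)
  ext z
  have : Quot.mk (Perm.SameCycle.setoid σ).r (σ z) = Quot.mk _ z :=
    Quot.sound ((sameCycle_rel σ z).symm)
  simpa using hbij.1 this

theorem ocount_le_qcc_of_mem {S : Set (Perm α)} {g : Perm α} (hg : g ∈ S) :
    ocount S ≤ qcc g :=
  card_quot_le_of_le (sameCycle_le_orel hg)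

theorem ocount_mono {S T : Set (Perm α)} (h : S ⊆ T) : ocount T ≤ ocount S := by
  apply card_quot_le_of_le
  rintro z w ⟨g, hg, rfl⟩
  exact ⟨g, Subgroup.closure_mono h hg, rfl⟩

/-- orbit count for a cyclic-ish generating set {a, 1}. -/
theorem qcc_le_ocount_pair_one (a : Perm α) : qcc a ≤ ocount {a, 1} := by
  apply card_quot_le_of_le
  apply orel_le_of_step
  rintro g (rfl | rfl) z
  · exact (sameCycle_rel g z).symm
  · exact Setoid.refl' _ z

theorem swap_step {x y : α} {e : Setoid α}
    (hx : e.r y x) : ∀ z, e.r (Equiv.swap x y z) z := by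
  intro z
  by_cases h1 : z = x
  · subst h1; rw [swap_apply_left]; exact hx
  by_cases h2 : z = y
  · subst h2; rw [swap_apply_right]; exact e.symm hx
  · rw [swap_apply_of_ne_of_ne h1 h2]

/-- adding a swap to the generators loses at most one orbit -/
theorem ocount_le_insert_swap (S : Set (Perm α)) (x y : α) :
    ocount S ≤ ocount (insert (Equiv.swap x y) S) + 1 := by
  calc ocount S ≤ Nat.card (Quotient (epair (orel S) x y)) + 1 := card_epair _ x y
    _ ≤ ocount (insert (Equiv.swap x y) S) + 1 := by
        apply Nat.add_le_add_right
        apply card_quot_le_of_le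
        apply orel_le_of_step
        rintro g (rfl | hg) z
        · apply swap_step (e := epair (orel S) x y)
          exact Or.inr ⟨Or.inr (Setoid.refl' _ y), Or.inl (Setoid.refl' _ x)⟩
        · exact Or.inl (mem_orel_of_mem hg z)

/-- if x,y already in the same orbit, adding the swap does not change orbit count -/
theorem ocount_insert_swap_eq {S : Set (Perm α)} {x y : α} (h : (orel S).r y x) :
    ocount (insert (Equiv.swap x y) S) = ocount S := by
  apply le_antisymm
  · exact ocount_mono (Set.subset_insert _ _)
  · apply card_quot_le_of_le
    apply orel_le_of_step
    rintro g (rfl | hg) z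
    · exact swap_step h z
    · exact mem_orel_of_mem hg z

theorem step_of_orel_mem {S : Set (Perm α)} {g h : Perm α} (hg : g ∈ S) (hh : h ∈ S) :
    ∀ v, (orel S).r ((g * h) v) v := fun v =>
  Setoid.trans' _ (mem_orel_of_mem hg (h v)) (mem_orel_of_mem hh v)

/-- `insert t {a*t, t*b}` has the same orbits as `insert t {a, b}` -/
theorem ocount_insert_swap_pair (a b : Perm α) (x y : α) :
    ocount (insert (Equiv.swap x y) {a * Equiv.swap x y, Equiv.swap x y * b})
      = ocount (insert (Equiv.swap x y) {a, b}) := by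
  apply card_quot_eq_of_eq
  intro z w
  constructor
  · apply orel_le_of_step
    rintro g (rfl | rfl | rfl) v
    · exact mem_orel_of_mem (Set.mem_insert _ _) v
    · exact step_of_orel_mem (S := insert (Equiv.swap x y) {a, b})
        (Set.mem_insert_of_mem _ (Set.mem_insert _ _)) (Set.mem_insert _ _) v
    · exact step_of_orel_mem (S := insert (Equiv.swap x y) {a, b})
        (Set.mem_insert _ _) (Set.mem_insert_of_mem _ (Set.mem_insert_of_mem _ rfl)) v
  · apply orel_le_of_step
    rintro g (rfl | hg | hg) v
    · exact mem_orel_of_mem (Set.mem_insert _ _) v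
    · -- a = (a * swap) * swap
      have hrw : g = (a * Equiv.swap x y) * Equiv.swap x y := by
        rw [mul_swap_mul_self, hg]
      rw [hrw]
      exact step_of_orel_mem
        (S := insert (Equiv.swap x y) {a * Equiv.swap x y, Equiv.swap x y * b})
        (Set.mem_insert_of_mem _ (Set.mem_insert _ _)) (Set.mem_insert _ _) v
    · -- b = swap * (swap * b)
      have hrw : g = Equiv.swap x y * (Equiv.swap x y * b) := by
        rw [swap_mul_self_mul, hg]
      rw [hrw]
      exact step_of_orel_mem
        (S := insert (Equiv.swap x y) {a * Equiv.swap x y, Equiv.swap x y * b})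
        (Set.mem_insert _ _)
        (Set.mem_insert_of_mem _ (Set.mem_insert_of_mem _ rfl)) v

end OrbitPart

section GenusPart
variable {α : Type*} [Fintype α] [DecidableEq α]

theorem genus_base (a : Perm α) :
    qcc a + qcc (1 : Perm α) + qcc (a * 1) ≤ Fintype.card α + 2 * ocount {a, (1:Perm α)} := by
  rw [mul_one]
  have h1 := qcc_le_card (1 : Perm α)
  have h2 := qcc_le_ocount_pair_one a
  omega

theorem genus (k : ℕ) : ∀ a b : Perm α, Fintype.card α - qcc b ≤ k →
    qcc a + qcc b + qcc (a * b) ≤ Fintype.card α + 2 * ocount {a, b} := by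
  induction k with
  | zero =>
    intro a b hb
    have hcard := qcc_le_card b
    have hb1 : b = 1 := eq_one_of_card_le_qcc (by omega)
    subst hb1; exact genus_base a
  | succ k IH =>
    intro a b hb
    by_cases hb1 : b = 1
    · subst hb1; exact genus_base a
    · obtain ⟨x, hx⟩ : ∃ x, b x ≠ x := by
        by_contra hc
        push_neg at hc
        exact hb1 (Equiv.ext hc)
      set y := b x with hy
      have hxy : x ≠ y := fun h => hx h.symm
      have hsc : b.SameCycle x y := sameCycle_rel b x
      have hsplit : qcc b + 1 ≤ qcc (Equiv.swap x y * b) := qcc_swap_mul_of_same hxy hsc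
      have hble : qcc (Equiv.swap x y * b) ≤ Fintype.card α := qcc_le_card _
      have hprod : (a * Equiv.swap x y) * (Equiv.swap x y * b) = a * b := by
        rw [mul_assoc, swap_mul_self_mul]
      have hIH := IH (a * Equiv.swap x y) (Equiv.swap x y * b) (by omega)
      rw [hprod] at hIH
      have hyx : (orel ({a, b} : Set (Perm α))).r y x := by
        have := mem_orel_of_mem (show b ∈ ({a, b} : Set (Perm α)) by simp) x
        rwa [← hy] at this
      have h1 : ocount (insert (Equiv.swap x y) ({a, b} : Set (Perm α))) = ocount {a, b} :=
        ocount_insert_swap_eq hyx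
      have h2 := ocount_insert_swap_pair a b x y
      by_cases hsc' : (a * Equiv.swap x y).SameCycle x y
      · have h4 : (orel ({a * Equiv.swap x y, Equiv.swap x y * b} : Set (Perm α))).r x y :=
          sameCycle_le_orel (Set.mem_insert _ _) x y hsc'
        have h5 := ocount_insert_swap_eq (Setoid.symm' _ h4)
        have ha : qcc a ≤ qcc (a * Equiv.swap x y) + 1 := by
          have := qcc_mul_swap_le (a * Equiv.swap x y) x y
          rwa [mul_swap_mul_self] at this
        omega
      · have ha : qcc a + 1 ≤ qcc (a * Equiv.swap x y) := by
          have := qcc_mul_swap_of_not hsc'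
          rwa [mul_swap_mul_self] at this
        have h3 := ocount_le_insert_swap
          ({a * Equiv.swap x y, Equiv.swap x y * b} : Set (Perm α)) x y
        omega

theorem genus' (a b : Perm α) :
    qcc a + qcc b + qcc (a * b) ≤ Fintype.card α + 2 * ocount {a, b} :=
  genus (Fintype.card α) a b (Nat.sub_le _ _)

end GenusPart

section FinPart

theorem minimalPeriod_le_card {N : ℕ} (τ : Perm (Fin N)) (z : Fin N) :
    Function.minimalPeriod τ z ≤ N := by
  classical
  have hinj := Function.iterate_injOn_Iio_minimalPeriod (f := ⇑τ) (x := z)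
  have hcard : (Finset.image (fun j => τ^[j] z) (Finset.range (Function.minimalPeriod τ z))).card
      = Function.minimalPeriod τ z := by
    rw [Finset.card_image_of_injOn, Finset.card_range]
    intro i hi j hj hij
    exact hinj (by simpa using Finset.mem_range.1 hi) (by simpa using Finset.mem_range.1 hj) hij
  calc Function.minimalPeriod τ z
      = _ := hcard.symm
    _ ≤ (Finset.univ : Finset (Fin N)).card := Finset.card_le_card (Finset.subset_univ _)
    _ = N := by simp

theorem mem_periodicPts_perm {N : ℕ} (τ : Perm (Fin N)) (z : Fin N) :
    z ∈ Function.periodicPts τ :=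
  ⟨orderOf τ, orderOf_pos τ, by
    simp only [Function.IsPeriodicPt, Function.IsFixedPt, Equiv.Perm.iterate_eq_pow,
      pow_orderOf_eq_one]; rfl⟩

theorem pow_apply_mod_minimalPeriod {N : ℕ} (τ : Perm (Fin N)) (z : Fin N) (i : ℕ) :
    (τ ^ (i % Function.minimalPeriod τ z)) z = (τ ^ i) z := by
  have := Function.iterate_mod_minimalPeriod_eq (f := ⇑τ) (x := z) (n := i)
  simpa only [Equiv.Perm.iterate_eq_pow] using this

theorem sameCycle_iff_exists_lt {N : ℕ} (hN : 0 < N) (τ : Perm (Fin N)) (a b : Fin N) :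
    τ.SameCycle a b ↔ ∃ k, k < N ∧ (τ ^ k) a = b := by
  constructor
  · intro h
    obtain ⟨i, _, hi⟩ := h.exists_pow_eq'
    have hmp_pos : 0 < Function.minimalPeriod τ a :=
      Function.minimalPeriod_pos_of_mem_periodicPts (mem_periodicPts_perm τ a)
    have hmp_le := minimalPeriod_le_card τ a
    refine ⟨i % Function.minimalPeriod τ a, ?_, ?_⟩
    · exact lt_of_lt_of_le (Nat.mod_lt _ hmp_pos) hmp_le
    · rw [pow_apply_mod_minimalPeriod]; exact hi
  · rintro ⟨k, _, hk⟩
    exact ⟨(k : ℤ), by rw [zpow_natCast]; exact hk⟩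

theorem cycleCount_eq_qcc {N : ℕ} (hN : 0 < N) (τ : Perm (Fin N)) :
    (Finset.univ.filter fun a => ∀ k ∈ Finset.range N, a ≤ (τ ^ k) a).card = qcc τ := by
  classical
  set R := Finset.univ.filter fun a : Fin N => ∀ k ∈ Finset.range N, a ≤ (τ ^ k) a with hR
  have hmem : ∀ a : Fin N, a ∈ R ↔ ∀ k ∈ Finset.range N, a ≤ (τ ^ k) a := by
    intro a; simp [hR]
  set f : {a // a ∈ R} → Quotient (Perm.SameCycle.setoid τ) :=
    fun a => Quot.mk _ a.1 with hf
  have hinj : Function.Injective f := by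
    rintro ⟨a, ha⟩ ⟨b, hb⟩ hab
    have hsc : τ.SameCycle a b := Quotient.exact hab
    obtain ⟨k, hk, hka⟩ := (sameCycle_iff_exists_lt hN τ a b).1 hsc
    obtain ⟨l, hl, hlb⟩ := (sameCycle_iff_exists_lt hN τ b a).1 hsc.symm
    have h1 : a ≤ b := hka ▸ (hmem a).1 ha k (Finset.mem_range.2 hk)
    have h2 : b ≤ a := hlb ▸ (hmem b).1 hb l (Finset.mem_range.2 hl)
    exact Subtype.ext (le_antisymm h1 h2)
  have hsurj : Function.Surjective f := by
    rintro ⟨z⟩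
    set S := (Finset.range N).image (fun k => (τ ^ k) z) with hS
    have hSne : S.Nonempty := ⟨z, by
      simp only [hS, Finset.mem_image]
      exact ⟨0, Finset.mem_range.2 hN, rfl⟩⟩
    set a := S.min' hSne with ha
    obtain ⟨j, _, hja⟩ : ∃ j ∈ Finset.range N, (τ ^ j) z = a := by
      have := S.min'_mem hSne
      simpa only [hS, Finset.mem_image] using this
    have hmp_pos : 0 < Function.minimalPeriod τ z :=
      Function.minimalPeriod_pos_of_mem_periodicPts (mem_periodicPts_perm τ z)
    have hmp_le := minimalPeriod_le_card τ z
    have haR : a ∈ R := by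
      rw [hmem]
      intro k _
      have h1 : (τ ^ k) a = (τ ^ (k + j)) z := by rw [← hja, ← Equiv.Perm.mul_apply, ← pow_add]
      have h2 : (τ ^ (k + j)) z ∈ S := by
        rw [← pow_apply_mod_minimalPeriod]
        simp only [hS, Finset.mem_image]
        exact ⟨(k + j) % Function.minimalPeriod τ z,
          Finset.mem_range.2 (lt_of_lt_of_le (Nat.mod_lt _ hmp_pos) hmp_le), rfl⟩
      rw [h1]
      exact S.min'_le _ h2
    refine ⟨⟨a, haR⟩, ?_⟩
    show Quot.mk _ a = Quot.mk _ z
    apply Quot.sound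
    show τ.SameCycle a z
    have hza : τ.SameCycle z a := ⟨(j : ℤ), by rw [zpow_natCast]; exact hja⟩
    exact hza.symm
  have : Nat.card {a // a ∈ R} = Nat.card (Quotient (Perm.SameCycle.setoid τ)) :=
    Nat.card_eq_of_bijective f ⟨hinj, hsurj⟩
  rw [qcc, ← this, Nat.card_eq_fintype_card, Fintype.card_coe]

end FinPart

section GammaPart

variable {m n : ℕ}

theorem gamma_apply_inl (u : Fin m) :
    gammaMN m n (finSumFinEquiv (Sum.inl u)) = finSumFinEquiv (Sum.inl (finRotate m u)) := by
  simp [gammaMN]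

theorem gamma_apply_inr (u : Fin n) :
    gammaMN m n (finSumFinEquiv (Sum.inr u)) = finSumFinEquiv (Sum.inr (finRotate n u)) := by
  simp [gammaMN]

theorem gamma_pow_inl (k : ℕ) (u : Fin m) :
    (gammaMN m n ^ k) (finSumFinEquiv (Sum.inl u))
      = finSumFinEquiv (Sum.inl ((finRotate m ^ k) u)) := by
  induction k with
  | zero => rfl
  | succ k ih =>
    have h1 : (gammaMN m n ^ (k+1)) (finSumFinEquiv (Sum.inl u))
        = gammaMN m n ((gammaMN m n ^ k) (finSumFinEquiv (Sum.inl u))) := by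
      rw [pow_succ']; rfl
    have h2 : (finRotate m ^ (k+1)) u = finRotate m ((finRotate m ^ k) u) := by
      rw [pow_succ']; rfl
    rw [h1, ih, gamma_apply_inl, h2]

theorem gamma_pow_inr (k : ℕ) (u : Fin n) :
    (gammaMN m n ^ k) (finSumFinEquiv (Sum.inr u))
      = finSumFinEquiv (Sum.inr ((finRotate n ^ k) u)) := by
  induction k with
  | zero => rfl
  | succ k ih =>
    have h1 : (gammaMN m n ^ (k+1)) (finSumFinEquiv (Sum.inr u))
        = gammaMN m n ((gammaMN m n ^ k) (finSumFinEquiv (Sum.inr u))) := by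
      rw [pow_succ']; rfl
    have h2 : (finRotate n ^ (k+1)) u = finRotate n ((finRotate n ^ k) u) := by
      rw [pow_succ']; rfl
    rw [h1, ih, gamma_apply_inr, h2]

open Fin.CommRing in
theorem finRotate_pow_apply {m' : ℕ} (k : ℕ) (u : Fin (m' + 1)) :
    ((finRotate (m' + 1)) ^ k) u = u + (k : Fin (m' + 1)) := by
  induction k with
  | zero => simp
  | succ k ih =>
    have h1 : ((finRotate (m'+1)) ^ (k+1)) u = finRotate (m'+1) (((finRotate (m'+1)) ^ k) u) := by
      rw [pow_succ']; rfl
    rw [h1, ih, finRotate_succ_apply]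
    have : ((k+1 : ℕ) : Fin (m'+1)) = (k : Fin (m'+1)) + 1 := by push_cast; ring
    rw [this, add_assoc]

theorem finRotate_reach {m' : ℕ} (u v : Fin (m' + 1)) :
    ∃ k : ℕ, ((finRotate (m' + 1)) ^ k) u = v :=
  ⟨(v - u).val, by rw [finRotate_pow_apply, Fin.cast_val_eq_self]; exact add_sub_cancel u v⟩

theorem exists_inl {z : Fin (m + n)} (hz : (z : ℕ) < m) :
    ∃ u : Fin m, finSumFinEquiv (Sum.inl u) = z :=
  ⟨⟨z.val, hz⟩, by rw [finSumFinEquiv_apply_left]; exact Fin.ext rfl⟩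

theorem exists_inr {z : Fin (m + n)} (hz : m ≤ (z : ℕ)) :
    ∃ u : Fin n, finSumFinEquiv (Sum.inr u) = z :=
  ⟨⟨z.val - m, by omega⟩, by
    rw [finSumFinEquiv_apply_right]
    exact Fin.ext (show m + ((z : ℕ) - m) = (z : ℕ) by omega)⟩

theorem gamma_val_lt (z : Fin (m + n)) : ((gammaMN m n z : ℕ) < m ↔ (z : ℕ) < m) := by
  by_cases hz : (z : ℕ) < m
  · obtain ⟨u, rfl⟩ := exists_inl hz
    rw [gamma_apply_inl, finSumFinEquiv_apply_left, finSumFinEquiv_apply_left]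
    simp only [Fin.coe_castAdd]
    simp [(finRotate m u).isLt, u.isLt]
  · have hz' : m ≤ (z : ℕ) := by omega
    obtain ⟨u, rfl⟩ := exists_inr hz'
    rw [gamma_apply_inr, finSumFinEquiv_apply_right, finSumFinEquiv_apply_right]
    simp only [Fin.coe_natAdd]
    omega

theorem qcc_gamma_ge (hm : 1 ≤ m) (hn : 1 ≤ n) : 2 ≤ qcc (gammaMN m n) := by
  have hN : 0 < m + n := by omega
  set a : Fin (m + n) := ⟨0, by omega⟩ with ha
  set b : Fin (m + n) := ⟨m, by omega⟩ with hb
  have hnot : ¬ (gammaMN m n).SameCycle a b := by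
    intro h
    obtain ⟨k, _, hk⟩ := (sameCycle_iff_exists_lt hN _ a b).1 h
    have hlt : ∀ j : ℕ, (((gammaMN m n ^ j) a : Fin (m+n)) : ℕ) < m := by
      intro j
      induction j with
      | zero => simpa [ha] using (by omega : 0 < m)
      | succ j ih =>
        have h1 : (gammaMN m n ^ (j+1)) a = gammaMN m n ((gammaMN m n ^ j) a) := by
          rw [pow_succ']; rfl
        rw [h1, gamma_val_lt]
        exact ih
    have := hlt k
    rw [hk, hb] at this
    simp at this
  have hne : (Quot.mk (Perm.SameCycle.setoid (gammaMN m n)).r a)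
      ≠ Quot.mk _ b := fun hc => hnot (Quotient.exact hc)
  have : Nontrivial (Quotient (Perm.SameCycle.setoid (gammaMN m n))) := ⟨_, _, hne⟩
  rw [qcc]
  exact Finite.one_lt_card_iff_nontrivial.2 this

theorem ocount_le_one (hm : 1 ≤ m) (hn : 1 ≤ n) (τ : Equiv.Perm (Fin (m + n)))
    (hconn : ∃ i j : Fin (m + n), (i : ℕ) < m ∧ m ≤ (j : ℕ) ∧ (τ i = j ∨ τ j = i)) :
    ocount {τ, τ⁻¹ * gammaMN m n} ≤ 1 := by
  obtain ⟨i, j, hi, hj, hor⟩ := hconn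
  set S : Set (Equiv.Perm (Fin (m+n))) := {τ, τ⁻¹ * gammaMN m n} with hS
  have hγ : gammaMN m n ∈ Subgroup.closure S := by
    have : gammaMN m n = τ * (τ⁻¹ * gammaMN m n) := by
      rw [← mul_assoc, mul_inv_cancel, one_mul]
    rw [this]
    exact Subgroup.mul_mem _ (Subgroup.subset_closure (Set.mem_insert _ _))
      (Subgroup.subset_closure (Set.mem_insert_of_mem _ rfl))
  have hτ : τ ∈ Subgroup.closure S := Subgroup.subset_closure (Set.mem_insert _ _)
  have hblock1 : ∀ z w : Fin (m+n), (z : ℕ) < m → (w : ℕ) < m → (orel S).r z w := by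
    obtain ⟨m', rfl⟩ : ∃ m', m = m' + 1 := ⟨m - 1, by omega⟩
    intro z w hz hw
    obtain ⟨u, rfl⟩ := exists_inl hz
    obtain ⟨v, rfl⟩ := exists_inl hw
    obtain ⟨k, hk⟩ := finRotate_reach v u
    exact ⟨gammaMN (m'+1) n ^ k, Subgroup.pow_mem _ hγ k, by rw [gamma_pow_inl, hk]⟩
  have hblock2 : ∀ z w : Fin (m+n), m ≤ (z : ℕ) → m ≤ (w : ℕ) → (orel S).r z w := by
    obtain ⟨n', rfl⟩ : ∃ n', n = n' + 1 := ⟨n - 1, by omega⟩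
    intro z w hz hw
    obtain ⟨u, rfl⟩ := exists_inr hz
    obtain ⟨v, rfl⟩ := exists_inr hw
    obtain ⟨k, hk⟩ := finRotate_reach v u
    exact ⟨gammaMN m (n'+1) ^ k, Subgroup.pow_mem _ hγ k, by rw [gamma_pow_inr, hk]⟩
  have hcross : (orel S).r i j := by
    rcases hor with h | h
    · exact Setoid.symm' _ ⟨τ, hτ, h⟩
    · exact ⟨τ, hτ, h⟩
  have halltrans : ∀ z w : Fin (m+n), (orel S).r z w := by
    intro z w
    by_cases hz : (z : ℕ) < m <;> by_cases hw : (w : ℕ) < m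
    · exact hblock1 z w hz hw
    · exact Setoid.trans' _ (hblock1 z i hz hi)
        (Setoid.trans' _ hcross (hblock2 j w hj (by omega)))
    · exact Setoid.trans' _ (hblock2 z j (by omega) hj)
        (Setoid.trans' _ (Setoid.symm' _ hcross) (hblock1 i w hi hw))
    · exact hblock2 z w (by omega) (by omega)
  have hsub : Subsingleton (Quotient (orel S)) := by
    constructor
    rintro ⟨z⟩ ⟨w⟩
    exact Quot.sound (halltrans z w)
  rw [ocount]
  exact Finite.card_le_one_iff_subsingleton.2 hsub

end GammaPart

/-- For an `(m,n)`-connected permutation `τ` of `{1,...,m+n}`,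
`#(τ) + #(τ⁻¹γ_{m,n}) ≤ m + n`. -/
theorem stmt6 {m n : ℕ} (hm : 1 ≤ m) (hn : 1 ≤ n) (τ : Equiv.Perm (Fin (m + n)))
    (hconn : ∃ i j : Fin (m + n), (i : ℕ) < m ∧ m ≤ (j : ℕ) ∧ (τ i = j ∨ τ j = i)) :
    cycleCount τ + cycleCount (τ⁻¹ * gammaMN m n) ≤ m + n := by
  have hN : 0 < m + n := by omega
  have h1 : cycleCount τ = qcc τ := cycleCount_eq_qcc hN τ
  have h2 : cycleCount (τ⁻¹ * gammaMN m n) = qcc (τ⁻¹ * gammaMN m n) :=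
    cycleCount_eq_qcc hN (τ⁻¹ * gammaMN m n)
  have hg := genus' τ (τ⁻¹ * gammaMN m n)
  have hprod : τ * (τ⁻¹ * gammaMN m n) = gammaMN m n := by
    rw [← mul_assoc, mul_inv_cancel, one_mul]
  rw [hprod] at hg
  have hγ2 := qcc_gamma_ge hm hn
  have hoc := ocount_le_one hm hn τ hconn
  have hcard : Fintype.card (Fin (m + n)) = m + n := Fintype.card_fin _
  omega
end
end

section
/- Suppose that for each nonidentity word w ∈ F_s, limsup_{N→∞} (1/(N!)^s) Σ_{σ_1,...,σ_s ∈ S_N} Fix w(σ_1,...,σ_s) < ∞ and limsup_{N→∞} (1/(N!)^s) Σ_{σ_1,...,σ_s ∈ S_N} (Fix w(σ_1,...,σ_s))² < ∞. Then for every word w ∈ F_s, the normalized trace tr^{(N)} U_w^{(N)} of the word evaluated at s independent uniform random N×N permutation matrices converges almost surely as N → ∞: to 1 if w is the identity, and to 0 otherwise. -/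
open Equiv MeasureTheory ProbabilityTheory Filter
open scoped ENNReal NNReal

noncomputable section

lemma lintegral_unif {s N : ℕ} (f : (Fin s → Equiv.Perm (Fin N)) → ℝ) :
    ∫⁻ σ, ENNReal.ofReal (f σ) ∂(PMF.uniformOfFintype (Fin s → Equiv.Perm (Fin N))).toMeasure
      = (∑ σ, ENNReal.ofReal (f σ)) * (((N.factorial : ℝ≥0∞)) ^ s)⁻¹ := by
  rw [lintegral_fintype]
  have h : ∀ σ : Fin s → Equiv.Perm (Fin N),
      (PMF.uniformOfFintype (Fin s → Equiv.Perm (Fin N))).toMeasure {σ}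
        = (((N.factorial : ℝ≥0∞)) ^ s)⁻¹ := by
    intro σ
    rw [PMF.toMeasure_apply_singleton _ _ (measurableSet_singleton _),
      PMF.uniformOfFintype_apply]
    congr 1
    rw [Fintype.card_fun]
    push_cast [Fintype.card_perm]
    simp
  simp_rw [h, ← Finset.sum_mul]

lemma unif_ofReal {s N : ℕ} (f : (Fin s → Equiv.Perm (Fin N)) → ℝ)
    (hf : ∀ σ, 0 ≤ f σ) :
    ∫⁻ σ, ENNReal.ofReal (f σ) ∂(PMF.uniformOfFintype (Fin s → Equiv.Perm (Fin N))).toMeasure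
      = ENNReal.ofReal ((1 / ((N.factorial : ℝ) ^ s)) * ∑ σ, f σ) := by
  rw [lintegral_unif, ← ENNReal.ofReal_sum_of_nonneg (fun σ _ => hf σ)]
  rw [ENNReal.ofReal_mul (by positivity), mul_comm]
  congr 1
  rw [one_div, ENNReal.ofReal_inv_of_pos (by positivity)]
  congr 1
  rw [ENNReal.ofReal_pow (by positivity)]
  congr 1
  exact (ENNReal.ofReal_natCast _).symm

lemma fixCount_le {N : ℕ} (σ : Equiv.Perm (Fin N)) : fixCount σ ≤ N := by
  classical
  calc fixCount σ ≤ Finset.univ.card := Finset.card_filter_le _ _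
  _ = N := by simp


/-- Proposition 4.2: under the first- and second-moment bounds on fixed-point counts
for nonidentity words, the normalized trace of `U_w^{(N)}` (a word in `s` independent
uniform random `N×N` permutation matrices) converges almost surely, to `1` if `w = e`
and to `0` otherwise. -/
theorem stmt16 {s : ℕ} {Ω : Type*} [MeasurableSpace Ω]
    (μ : Measure Ω) [IsProbabilityMeasure μ]
    (V : (N : ℕ) → Ω → (Fin s → Equiv.Perm (Fin N)))
    (hVmeas : ∀ N, Measurable (V N))
    (hunif : ∀ N, 1 ≤ N → Measure.map (V N) μ
      = (PMF.uniformOfFintype (Fin s → Equiv.Perm (Fin N))).toMeasure)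
    (hbound1 : ∀ w : FreeGroup (Fin s), w ≠ 1 →
      IsBoundedUnder (· ≤ ·) atTop (fun N : ℕ =>
        (1 / ((N.factorial : ℝ) ^ s)) *
          ∑ σ : Fin s → Equiv.Perm (Fin N), (fixCount (wordPerm σ w) : ℝ)))
    (hbound2 : ∀ w : FreeGroup (Fin s), w ≠ 1 →
      IsBoundedUnder (· ≤ ·) atTop (fun N : ℕ =>
        (1 / ((N.factorial : ℝ) ^ s)) *
          ∑ σ : Fin s → Equiv.Perm (Fin N), (fixCount (wordPerm σ w) : ℝ) ^ 2))
    (w : FreeGroup (Fin s)) :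
    ∀ᵐ ω ∂μ, Tendsto (fun N : ℕ => (fixCount (wordPerm (V N ω) w) : ℝ) / N) atTop
      (nhds (if w = 1 then 1 else 0)) := by
  classical
  by_cases hw : w = 1
  · subst hw
    rw [if_pos rfl]
    refine Filter.Eventually.of_forall fun ω => ?_
    have heq : ∀ᶠ N in atTop,
        (1 : ℝ) = (fixCount (wordPerm (V N ω) (1 : FreeGroup (Fin s))) : ℝ) / N := by
      filter_upwards [eventually_ge_atTop 1] with N hN
      have h1 : wordPerm (V N ω) (1 : FreeGroup (Fin s)) = 1 :=
        map_one (FreeGroup.lift (V N ω))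
      have h2 : fixCount (1 : Equiv.Perm (Fin N)) = N := by
        simp [fixCount]
      rw [h1, h2]
      have : (0 : ℝ) < N := by exact_mod_cast hN
      field_simp
    exact Tendsto.congr' heq tendsto_const_nhds
  · rw [if_neg hw]
    -- the real-valued squared ratio
    set r : (N : ℕ) → (Fin s → Equiv.Perm (Fin N)) → ℝ :=
      fun N σ => ((fixCount (wordPerm σ w) : ℝ) / N) ^ 2 with hrdef
    have hr_nonneg : ∀ N σ, 0 ≤ r N σ := fun N σ => sq_nonneg _
    have hr_le_one : ∀ N σ, r N σ ≤ 1 := by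
      intro N σ
      rcases Nat.eq_zero_or_pos N with h0 | hpos
      · subst h0
        have : fixCount (wordPerm σ w) = 0 := Nat.le_zero.mp (fixCount_le _)
        simp [hrdef, this]
      · have hfix : (fixCount (wordPerm σ w) : ℝ) ≤ N := by
          exact_mod_cast fixCount_le (wordPerm σ w)
        have hd : (fixCount (wordPerm σ w) : ℝ) / N ≤ 1 := by
          rw [div_le_one (by exact_mod_cast hpos)]
          exact hfix
        have h0 : (0 : ℝ) ≤ (fixCount (wordPerm σ w) : ℝ) / N := by positivity
        exact pow_le_one₀ h0 hd
    -- measurability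
    have hFmeas : ∀ N, Measurable (fun ω => ENNReal.ofReal (r N (V N ω))) := fun N =>
      (Measurable.of_discrete (f := fun σ => ENNReal.ofReal (r N σ))).comp (hVmeas N)
    -- bound on moments
    obtain ⟨B, hB⟩ := hbound2 w hw
    obtain ⟨N₀, hN₀⟩ := eventually_atTop.1 (eventually_map.1 hB)
    set C : ℝ := max B 0 with hCdef
    have hC0 : 0 ≤ C := le_max_right _ _
    set bnd : ℕ → ℝ := fun n => C * (1 / (n : ℝ) ^ 2) with hbnddef
    have hbnd_nonneg : ∀ n, 0 ≤ bnd n := fun n => by positivity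
    have hbnd_sum : Summable bnd :=
      (Real.summable_one_div_nat_pow.2 (by norm_num)).mul_left C
    set N₁ : ℕ := max N₀ 1 with hN₁def
    -- the lintegrals
    set g : ℕ → ℝ≥0∞ := fun N => ∫⁻ ω, ENNReal.ofReal (r N (V N ω)) ∂μ with hgdef
    have hg_le_one : ∀ N, g N ≤ 1 := by
      intro N
      calc g N ≤ ∫⁻ _, 1 ∂μ :=
            lintegral_mono fun ω => ENNReal.ofReal_le_one.2 (hr_le_one N _)
        _ = 1 := by simp
    have hg_eq : ∀ N, 1 ≤ N → g N
        = ENNReal.ofReal ((1 / ((N.factorial : ℝ) ^ s)) * ∑ σ, r N σ) := by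
      intro N hN
      have hmap : g N = ∫⁻ σ, ENNReal.ofReal (r N σ) ∂(Measure.map (V N) μ) :=
        (lintegral_map (μ := μ) (f := fun σ => ENNReal.ofReal (r N σ)) Measurable.of_discrete (hVmeas N)).symm
      rw [hmap, hunif N hN, unif_ofReal _ (hr_nonneg N)]
    have hq_le : ∀ N, N₁ ≤ N → (1 / ((N.factorial : ℝ) ^ s)) * ∑ σ, r N σ ≤ bnd N := by
      intro N hN
      have hN0 : N₀ ≤ N := le_trans (le_max_left _ _) hN
      have hN1 : 1 ≤ N := le_trans (le_max_right _ _) hN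
      have hNpos : (0 : ℝ) < (N : ℝ) ^ 2 := by
        have : (0:ℝ) < N := by exact_mod_cast hN1
        positivity
      have hsum : ∑ σ : Fin s → Equiv.Perm (Fin N), r N σ
          = (∑ σ : Fin s → Equiv.Perm (Fin N), (fixCount (wordPerm σ w) : ℝ) ^ 2) / (N : ℝ) ^ 2 := by
        rw [Finset.sum_div]
        refine Finset.sum_congr rfl fun σ _ => ?_
        rw [hrdef]
        ring
      rw [hsum, hbnddef]
      have hB' := hN₀ N hN0
      calc (1 / ((N.factorial : ℝ) ^ s)) *
            ((∑ σ : Fin s → Equiv.Perm (Fin N), (fixCount (wordPerm σ w) : ℝ) ^ 2) / (N : ℝ) ^ 2)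
          = ((1 / ((N.factorial : ℝ) ^ s)) *
            ∑ σ : Fin s → Equiv.Perm (Fin N), (fixCount (wordPerm σ w) : ℝ) ^ 2) / (N : ℝ) ^ 2 := by
            ring
        _ ≤ B / (N : ℝ) ^ 2 := by gcongr
        _ ≤ C / (N : ℝ) ^ 2 := by gcongr; exact le_max_left _ _
        _ = C * (1 / (N : ℝ) ^ 2) := by ring
    -- tsum of g is finite
    have htsum : ∑' N, g N ≠ ⊤ := by
      have hle : ∀ N, g N ≤ (if N < N₁ then (1 : ℝ≥0∞) else 0) + ENNReal.ofReal (bnd N) := by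
        intro N
        by_cases h : N < N₁
        · rw [if_pos h]
          exact le_trans (hg_le_one N) le_self_add
        · rw [if_neg h, zero_add]
          push_neg at h
          rw [hg_eq N (le_trans (le_max_right _ _) h)]
          exact ENNReal.ofReal_le_ofReal (hq_le N h)
      have h1 : ∑' N, (if N < N₁ then (1 : ℝ≥0∞) else 0) ≠ ⊤ := by
        rw [tsum_eq_sum (s := Finset.range N₁) (fun b hb => if_neg (by simpa using hb))]
        have hb1 : ∑ b ∈ Finset.range N₁, (if b < N₁ then (1 : ℝ≥0∞) else 0)
            ≤ ∑ _b ∈ Finset.range N₁, (1 : ℝ≥0∞) :=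
          Finset.sum_le_sum fun i _ => by split <;> simp
        refine (lt_of_le_of_lt hb1 ?_).ne
        simpa using ENNReal.natCast_lt_top N₁
      have h2 : ∑' N, ENNReal.ofReal (bnd N) ≠ ⊤ := by
        rw [← ENNReal.ofReal_tsum_of_nonneg hbnd_nonneg hbnd_sum]
        exact ENNReal.ofReal_ne_top
      refine ne_top_of_le_ne_top ?_ (ENNReal.tsum_le_tsum hle)
      rw [ENNReal.tsum_add]
      exact ENNReal.add_ne_top.2 ⟨h1, h2⟩
    -- a.e. finiteness of the sum
    have hmeas_tsum : Measurable (fun ω => ∑' N, ENNReal.ofReal (r N (V N ω))) :=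
      Measurable.ennreal_tsum hFmeas
    have hfin : ∫⁻ ω, ∑' N, ENNReal.ofReal (r N (V N ω)) ∂μ ≠ ⊤ := by
      rw [lintegral_tsum fun N => (hFmeas N).aemeasurable]
      exact htsum
    filter_upwards [ae_lt_top hmeas_tsum hfin] with ω hω
    have hsummable : Summable fun N => (ENNReal.ofReal (r N (V N ω))).toReal :=
      ENNReal.summable_toReal hω.ne
    have hsummable' : Summable fun N => r N (V N ω) := by
      refine hsummable.congr fun N => ?_
      exact ENNReal.toReal_ofReal (hr_nonneg N _)
    have htend : Tendsto (fun N => r N (V N ω)) atTop (nhds 0) :=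
      hsummable'.tendsto_atTop_zero
    have hsqrt : Tendsto (fun N => Real.sqrt (r N (V N ω))) atTop (nhds 0) := by
      have := (Real.continuous_sqrt.tendsto 0).comp htend
      simpa [Function.comp_def] using this
    refine hsqrt.congr fun N => ?_
    rw [hrdef]
    exact Real.sqrt_sq (by positivity)
end
end
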